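/- arXiv:0909.2120 — 5 statements merged into one kernel-verified Lean document; each statement's English description precedes it below -/
import Mathlib

section
/- For all integers d ≥ 2, N ≥ 1 and every probability measure μ ∈ M(d,N), setting x_μ := H(μ)/(N log d), the neural complexity satisfies I(μ)/(N log d) ≤ x_μ(1 − x_μ) ≤ 1/4. -/
open Filter

noncomputable def entropy {α : Type*} [Fintype α] (p : α → ℝ) : ℝ :=
  -∑ x, p x * Real.log (p x)

def IsPMF {α : Type*} [Fintype α] (p : α → ℝ) : Prop :=
  (∀ x, 0 ≤ p x) ∧ ∑ x, p x = 1

noncomputable def margin {d N : ℕ} (μ : (Fin N → Fin d) → ℝ) (S : Finset (Fin N)) :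
    (({ i // i ∈ S }) → Fin d) → ℝ :=
  fun y => ∑ x : Fin N → Fin d, if ∀ i : { i // i ∈ S }, x i.1 = y i then μ x else 0

/-- Mutual information between `X_S` and `X_{Sᶜ}`. -/
noncomputable def MIS {d N : ℕ} (μ : (Fin N → Fin d) → ℝ) (S : Finset (Fin N)) : ℝ :=
  entropy (margin μ S) + entropy (margin μ Sᶜ) - entropy μ

/-- The Edelman–Sporns–Tononi neural complexity. -/
noncomputable def neural {d N : ℕ} (μ : (Fin N → Fin d) → ℝ) : ℝ :=
  (1 / (N + 1 : ℝ)) * ∑ S : Finset (Fin N), (1 / (N.choose S.card : ℝ)) * MIS μ S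

noncomputable def avgEntropy {d N : ℕ} (μ : (Fin N → Fin d) → ℝ) (k : ℕ) : ℝ :=
  (1 / (N.choose k : ℝ)) *
    ∑ S ∈ Finset.powersetCard k (Finset.univ : Finset (Fin N)), entropy (margin μ S)

/-- The entropy profile `h_X : [0,1] → [0,1]`, piecewise affine interpolation of
`k/N ↦ (average entropy of subsystems of size k)/(N log d)`. -/
noncomputable def profile {d N : ℕ} (μ : (Fin N → Fin d) → ℝ) (t : ℝ) : ℝ :=
  if t ≤ 0 then 0 else
    (avgEntropy μ (⌈t * N⌉.toNat - 1)
      + (t * N - ((⌈t * N⌉.toNat - 1 : ℕ) : ℝ)) *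
        (avgEntropy μ ⌈t * N⌉.toNat - avgEntropy μ (⌈t * N⌉.toNat - 1)))
      / (N * Real.log d)


/-!
Grouping the subsets by size and pairing `S` with `Sᶜ` gives
`(N + 1) I(μ) = 2 ∑_{k ≤ N} h_k - (N + 1) H(μ)`, where `h_k` is the average entropy of the
marginals on `k` coordinates. A marginal has at most the entropy of `μ` and lives on `d ^ k`
points, so `h_k ≤ log d · min(k, m)` with `m = H(μ) / log d ∈ [0, N]`. Summing these minima
exactly (with `j = ⌊m⌋`) reduces the claim `I(μ) ≤ H(μ) (N log d - H(μ)) / (N log d)` to the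
elementary inequality `2N ∑_{k ≤ N} min(k, m) ≤ (N + 1) m (2N - m)`.
-/

open Finset Real

section Entropy

variable {α β : Type*} [Fintype α]

theorem IsPMF.le_one {p : α → ℝ} (hp : IsPMF p) (x : α) : p x ≤ 1 :=
  hp.2 ▸ single_le_sum (fun y _ => hp.1 y) (mem_univ x)

theorem entropy_eq_sum_negMulLog (p : α → ℝ) : entropy p = ∑ x, negMulLog (p x) := by
  simp [entropy, negMulLog, ← sum_neg_distrib]

theorem entropy_nonneg {p : α → ℝ} (hp : IsPMF p) : 0 ≤ entropy p := by
  rw [entropy_eq_sum_negMulLog]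
  exact sum_nonneg fun x _ => negMulLog_nonneg (hp.1 x) (hp.le_one x)

theorem entropy_le_log_card {p : α → ℝ} (hp : IsPMF p) :
    entropy p ≤ log (Fintype.card α) := by
  have hα : Nonempty α := by
    by_contra h
    simpa [not_nonempty_iff.1 h] using hp.2
  set c : ℝ := (Fintype.card α : ℝ)
  have hc : 0 < c := by simp [c, Fintype.card_pos]
  have jensen := concaveOn_negMulLog.le_map_sum (t := univ) (w := fun _ => 1 / c) (p := p)
    (fun _ _ => by positivity) (by simp [c]) (fun x _ => Set.mem_Ici.2 (hp.1 x))
  simp only [smul_eq_mul, ← mul_sum, hp.2] at jensen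
  rw [entropy_eq_sum_negMulLog]
  have : negMulLog (1 / c * 1) = 1 / c * log c := by
    simp [negMulLog, log_inv]
  rw [this] at jensen
  have := mul_le_mul_of_nonneg_left jensen hc.le
  field_simp at this
  linarith

def pushforward [DecidableEq β] (f : α → β) (p : α → ℝ) (y : β) : ℝ :=
  ∑ x with f x = y, p x

variable [DecidableEq β]

theorem sum_pushforward [Fintype β] (f : α → β) (p : α → ℝ) :
    ∑ y, pushforward f p y = ∑ x, p x :=
  sum_fiberwise univ f p

theorem IsPMF.pushforward [Fintype β] {p : α → ℝ} (hp : IsPMF p) (f : α → β) :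
    IsPMF (pushforward f p) :=
  ⟨fun _ => sum_nonneg fun x _ => hp.1 x, by rw [sum_pushforward, hp.2]⟩

theorem le_pushforward_apply {p : α → ℝ} (hp : ∀ x, 0 ≤ p x) (f : α → β) (x : α) :
    p x ≤ pushforward f p (f x) :=
  single_le_sum (fun y _ => hp y) (by simp)

theorem entropy_pushforward_le [Fintype β] {p : α → ℝ} (hp : IsPMF p) (f : α → β) :
    entropy (pushforward f p) ≤ entropy p := by
  have regroup : ∑ y, pushforward f p y * log (pushforward f p y)
      = ∑ x, p x * log (pushforward f p (f x)) := by
    rw [← sum_fiberwise univ f fun x => p x * log (pushforward f p (f x))]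
    refine sum_congr rfl fun y _ => ?_
    rw [sum_congr rfl fun x hx =>
      congrArg (fun z => p x * log (pushforward f p z)) (mem_filter.1 hx).2, ← sum_mul]
    rfl
  rw [entropy, entropy, neg_le_neg_iff, regroup]
  refine sum_le_sum fun x _ => ?_
  rcases (hp.1 x).eq_or_lt with h | h
  · simp [← h]
  · exact mul_le_mul_of_nonneg_left (log_le_log h (le_pushforward_apply hp.1 f x)) h.le

end Entropy

section Subsets

variable {ι : Type*} [Fintype ι]

theorem sum_one_div_choose_card :
    ∑ S : Finset ι, 1 / ((Fintype.card ι).choose #S : ℝ) = Fintype.card ι + 1 := by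
  rw [← powerset_univ, sum_powerset_apply_card (fun k => 1 / ((Fintype.card ι).choose k : ℝ)),
    card_univ]
  have hterm : ∀ k ∈ range (Fintype.card ι + 1),
      (Fintype.card ι).choose k • (1 / ((Fintype.card ι).choose k : ℝ)) = 1 := fun k hk => by
    rw [nsmul_eq_mul, mul_one_div_cancel]
    exact Nat.cast_ne_zero.2 (Nat.choose_pos (Nat.lt_succ_iff.1 (mem_range.1 hk))).ne'
  rw [sum_congr rfl hterm]
  simp

theorem sum_one_div_choose_card_mul_compl [DecidableEq ι] (f : Finset ι → ℝ) :
    ∑ S : Finset ι, 1 / ((Fintype.card ι).choose #S : ℝ) * f Sᶜ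
      = ∑ S : Finset ι, 1 / ((Fintype.card ι).choose #S : ℝ) * f S :=
  Fintype.sum_bijective compl compl_involutive.bijective _ _ fun S => by
    rw [card_compl, Nat.choose_symm (card_le_univ S)]

end Subsets

section Marginals

variable {d N : ℕ}

theorem margin_eq_pushforward (μ : (Fin N → Fin d) → ℝ) (S : Finset (Fin N)) :
    margin μ S = pushforward (fun x (i : S) => x i) μ := by
  funext y
  simp [margin, pushforward, sum_filter, funext_iff]

theorem entropy_le_card_mul_log {ι : Type*} [Fintype ι] [DecidableEq ι] {p : (ι → Fin d) → ℝ}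
    (hp : IsPMF p) : entropy p ≤ Fintype.card ι * log d := by
  simpa [log_pow] using entropy_le_log_card hp

theorem entropy_margin_le_entropy {μ : (Fin N → Fin d) → ℝ} (hμ : IsPMF μ) (S : Finset (Fin N)) :
    entropy (margin μ S) ≤ entropy μ :=
  margin_eq_pushforward μ S ▸ entropy_pushforward_le hμ _

theorem entropy_margin_le_card_mul_log {μ : (Fin N → Fin d) → ℝ} (hμ : IsPMF μ)
    (S : Finset (Fin N)) :
    entropy (margin μ S) ≤ #S * log d := by
  have := entropy_le_card_mul_log (margin_eq_pushforward μ S ▸ hμ.pushforward _)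
  rwa [Fintype.card_coe] at this

theorem avgEntropy_le_min {μ : (Fin N → Fin d) → ℝ} (hμ : IsPMF μ) {k : ℕ} (hk : k ≤ N) :
    avgEntropy μ k ≤ min (k * log d) (entropy μ) := by
  have hC : (0 : ℝ) < N.choose k := Nat.cast_pos.2 (Nat.choose_pos hk)
  have hbound : ∀ S ∈ powersetCard k (univ : Finset (Fin N)),
      entropy (margin μ S) ≤ min (k * log d) (entropy μ) := fun S hS =>
    le_min ((mem_powersetCard.1 hS).2 ▸ entropy_margin_le_card_mul_log hμ S)
      (entropy_margin_le_entropy hμ S)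
  have hsum := sum_le_card_nsmul _ _ _ hbound
  rw [card_powersetCard, card_univ, Fintype.card_fin, nsmul_eq_mul] at hsum
  rw [avgEntropy, one_div_mul_eq_div, div_le_iff₀ hC, mul_comm]
  exact hsum

theorem sum_one_div_choose_mul_entropy_margin (μ : (Fin N → Fin d) → ℝ) :
    ∑ S : Finset (Fin N), 1 / (N.choose #S : ℝ) * entropy (margin μ S)
      = ∑ k ∈ range (N + 1), avgEntropy μ k := by
  rw [← powerset_univ, sum_powerset, card_univ, Fintype.card_fin]
  refine sum_congr rfl fun k _ => ?_
  rw [avgEntropy, mul_sum]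
  exact sum_congr rfl fun S hS => by rw [(mem_powersetCard.1 hS).2]

theorem neural_eq_sum_avgEntropy (μ : (Fin N → Fin d) → ℝ) :
    (N + 1) * neural μ = 2 * ∑ k ∈ range (N + 1), avgEntropy μ k - (N + 1) * entropy μ := by
  have hweights := sum_one_div_choose_card (ι := Fin N)
  have hcompl := sum_one_div_choose_card_mul_compl (ι := Fin N) fun S => entropy (margin μ S)
  simp only [Fintype.card_fin] at hweights hcompl
  simp only [neural, MIS, mul_sub, mul_add, sum_sub_distrib, sum_add_distrib, hcompl,
    ← sum_mul, hweights, sum_one_div_choose_mul_entropy_margin]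
  field_simp
  ring

end Marginals

section SumMin

theorem two_mul_sum_range_min {n j : ℕ} {m : ℝ} (hjn : j ≤ n) (hjm : j ≤ m) (hmj : m ≤ j + 1) :
    2 * ∑ k ∈ range (n + 1), min (k : ℝ) m = j * (j + 1) + 2 * (n - j) * m := by
  induction n, hjn using Nat.le_induction with
  | base =>
    have hgauss : 2 * ∑ k ∈ range (j + 1), k = j * (j + 1) := by
      rw [mul_comm, sum_range_id_mul_two, Nat.add_sub_cancel, mul_comm]
    rw [sum_congr rfl fun k hk =>
      min_eq_left ((Nat.cast_le.2 (Nat.lt_succ_iff.1 (mem_range.1 hk))).trans hjm)]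
    rw [sub_self, mul_zero, zero_mul, add_zero]
    simpa using congrArg (Nat.cast (R := ℝ)) hgauss
  | succ n hjn ih =>
    have hmn : m ≤ (n + 1 : ℕ) := hmj.trans (by exact_mod_cast Nat.succ_le_succ hjn)
    rw [sum_range_succ, mul_add, ih, min_eq_right hmn]
    push_cast
    ring

theorem two_mul_mul_sum_range_min_le (n : ℕ) {m : ℝ} (hm : 0 ≤ m) (hmn : m ≤ n) :
    2 * n * ∑ k ∈ range (n + 1), min (k : ℝ) m ≤ (n + 1) * m * (2 * n - m) := by
  set j := ⌊m⌋₊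
  have hjm : (j : ℝ) ≤ m := Nat.floor_le hm
  have hmj : m ≤ j + 1 := (Nat.lt_floor_add_one m).le
  have hjn : j ≤ n := Nat.floor_le_of_le hmn
  rw [mul_comm 2, mul_assoc, two_mul_sum_range_min hjn hjm hmj]
  -- the defect equals `m (n - m) + n (m - j) (j + 1 - m)`
  nlinarith [mul_nonneg hm (sub_nonneg.2 hmn),
    mul_nonneg (Nat.cast_nonneg n) (mul_nonneg (sub_nonneg.2 hjm) (sub_nonneg.2 hmj))]

end SumMin

theorem mul_neural_le {d N : ℕ} {μ : (Fin N → Fin d) → ℝ} (hd : 1 < d) (hμ : IsPMF μ) :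
    N * log d * neural μ ≤ entropy μ * (N * log d - entropy μ) := by
  have hL : 0 < log d := log_pos (by exact_mod_cast hd)
  set m := entropy μ / log d
  have hH : entropy μ = m * log d := (div_mul_cancel₀ _ hL.ne').symm
  have hm : 0 ≤ m := div_nonneg (entropy_nonneg hμ) hL.le
  have hmN : m ≤ N := (div_le_iff₀ hL).2 (by simpa using entropy_le_card_mul_log hμ)
  have havg : ∑ k ∈ range (N + 1), avgEntropy μ k
      ≤ log d * ∑ k ∈ range (N + 1), min (k : ℝ) m := by
    rw [mul_sum]
    refine sum_le_sum fun k hk => ?_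
    rw [mul_comm, min_mul_of_nonneg _ _ hL.le, ← hH]
    exact avgEntropy_le_min hμ (Nat.lt_succ_iff.1 (mem_range.1 hk))
  have hcomb := two_mul_mul_sum_range_min_le N hm hmN
  have key : (N + 1) * (N * log d * neural μ) ≤ (N + 1) * (entropy μ * (N * log d - entropy μ)) :=
    calc (N + 1) * (N * log d * neural μ)
        = N * log d * (2 * ∑ k ∈ range (N + 1), avgEntropy μ k - (N + 1) * entropy μ) := by
          rw [← neural_eq_sum_avgEntropy]; ring
      _ ≤ N * log d *
            (2 * (log d * ∑ k ∈ range (N + 1), min (k : ℝ) m) - (N + 1) * entropy μ) := by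
          gcongr
      _ = log d ^ 2 * (2 * N * ∑ k ∈ range (N + 1), min (k : ℝ) m - N * (N + 1) * m) := by
          rw [hH]; ring
      _ ≤ log d ^ 2 * ((N + 1) * m * (2 * N - m) - N * (N + 1) * m) := by gcongr
      _ = (N + 1) * (entropy μ * (N * log d - entropy μ)) := by rw [hH]; ring
  exact le_of_mul_le_mul_left key (by positivity)

/-- For all integers `d ≥ 2`, `N ≥ 1` and every probability measure
`μ ∈ M(d,N)`, setting `x_μ := H(μ)/(N log d)`, the neural complexity satisfies
`I(μ)/(N log d) ≤ x_μ (1 − x_μ) ≤ 1/4`. -/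
theorem stmt0 (d N : ℕ) (hd : 2 ≤ d) (hN : 1 ≤ N)
    (μ : (Fin N → Fin d) → ℝ) (hμ : IsPMF μ) :
    neural μ / (N * Real.log d) ≤
      (entropy μ / (N * Real.log d)) * (1 - entropy μ / (N * Real.log d)) ∧
    (entropy μ / (N * Real.log d)) * (1 - entropy μ / (N * Real.log d)) ≤ 1 / 4 := by
  have hL : 0 < log d := log_pos (by exact_mod_cast hd)
  have hNL : 0 < N * log d := mul_pos (by exact_mod_cast hN) hL
  refine ⟨?_, by nlinarith [sq_nonneg (entropy μ / (N * log d) - 1 / 2)]⟩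
  have hx : entropy μ / (N * log d) * (1 - entropy μ / (N * log d))
      = entropy μ * (N * log d - entropy μ) / (N * log d) / (N * log d) := by
    field_simp
  rw [hx, div_le_div_iff_of_pos_right hNL, le_div_iff₀ hNL, mul_comm]
  exact mul_neural_le hd hμ
end

section
/- For every integer d ≥ 2 and every x ∈ [0,1], there exists a sequence of probability measures μ^N ∈ M(d,N) such that lim_{N→∞} H(μ^N)/(N log d) = x and lim_{N→∞} I(μ^N)/(N log d) = x(1 − x), where I is the neural complexity. -/
open Filter

/-!
Take for `μ` the empirical measure of `d ^ m` points of `{0,…,d-1}^N`, where `m = ⌊xN⌋`. The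
entropy of every marginal `X_S` is at most `min(m, |S|) log d`, and at least minus the logarithm
of its collision probability. If the points are drawn uniformly and independently, that
collision probability has expectation at most `d^{-m} + d^{-|S|}`, so by Jensen the expected
entropy deficit of each marginal is at most `log 2`. Hence some choice of points has all deficits
(of `X` itself and, on average, of the subsystems entering `I`) below `3 log 2`. Then
`H(μ) = m log d + O(1)`, and since `∑_{k ≤ N} (min(m,k) + min(m,N-k) - m) = m(N-m)`, also
`I(μ) = m(N-m)/(N+1) log d + O(1)`.
-/

open Finset Real

theorem sum_mul_log_le_log_sum_mul {ι : Type*} {t : Finset ι} {p r : ι → ℝ}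
    (hp : ∀ i ∈ t, 0 ≤ p i) (hp₁ : ∑ i ∈ t, p i = 1)
    (hr : ∀ i ∈ t, p i ≠ 0 → 0 < r i) :
    ∑ i ∈ t, p i * log (r i) ≤ log (∑ i ∈ t, p i * r i) := by
  classical
  have hsupp (g : ι → ℝ) : ∑ i ∈ t with p i ≠ 0, p i * g i = ∑ i ∈ t, p i * g i :=
    sum_filter_of_ne fun _ _ h => left_ne_zero_of_mul h
  have := strictConcaveOn_log_Ioi.concaveOn.le_map_sum (t := {i ∈ t | p i ≠ 0}) (w := p)
    (p := r) (fun i hi => hp i (mem_filter.1 hi).1) (by rwa [sum_filter_ne_zero])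
    (fun i hi => hr i (mem_filter.1 hi).1 (mem_filter.1 hi).2)
  simpa only [smul_eq_mul, hsupp] using this

theorem sum_log_le_card_mul_log_average {ι : Type*} [Fintype ι] [Nonempty ι] {r : ι → ℝ}
    (hr : ∀ i, 0 < r i) :
    ∑ i, log (r i) ≤ Fintype.card ι * log ((∑ i, r i) / Fintype.card ι) := by
  have hc : (0 : ℝ) < Fintype.card ι := by exact_mod_cast Fintype.card_pos
  have h := sum_mul_log_le_log_sum_mul (t := univ) (p := fun _ => (Fintype.card ι : ℝ)⁻¹)
    (fun _ _ => by positivity) (by simp [hc.ne']) fun i _ _ => hr i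
  rw [← mul_sum, ← mul_sum] at h
  rwa [← inv_mul_le_iff₀ hc, div_eq_inv_mul]

section Entropy

variable {α : Type*} [Fintype α] {p : α → ℝ}

theorem entropy_eq_sum_mul_log_inv (p : α → ℝ) : entropy p = ∑ x, p x * log (p x)⁻¹ := by
  simp [entropy, log_inv]

theorem entropy_le_log_card_support (hp : IsPMF p) : entropy p ≤ log #{x | p x ≠ 0} := by
  have h := sum_mul_log_le_log_sum_mul (t := univ) (r := fun x => (p x)⁻¹)
    (fun x _ => hp.1 x) hp.2 (fun x _ hx => inv_pos.2 ((hp.1 x).lt_of_ne' hx))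
  have hcard : ∑ x, p x * (p x)⁻¹ = #{x | p x ≠ 0} := by
    rw [card_filter]; push_cast
    exact sum_congr rfl fun x _ => by split_ifs with h <;> simp_all
  rwa [entropy_eq_sum_mul_log_inv, ← hcard]

theorem neg_log_sum_sq_le_entropy (hp : IsPMF p) : -log (∑ x, p x ^ 2) ≤ entropy p := by
  have h := sum_mul_log_le_log_sum_mul (t := univ) (r := p)
    (fun x _ => hp.1 x) hp.2 (fun x _ hx => (hp.1 x).lt_of_ne' hx)
  simp only [← sq] at h
  rw [entropy]; linarith

theorem IsPMF.sum_sq_pos (hp : IsPMF p) : 0 < ∑ x, p x ^ 2 := by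
  obtain ⟨x, -, hx⟩ := exists_ne_zero_of_sum_ne_zero (hp.2.trans_ne one_ne_zero)
  exact lt_of_lt_of_le (by positivity) (single_le_sum (fun y _ => sq_nonneg (p y)) (mem_univ x))

end Entropy

section Empirical

variable {n : ℕ} {γ : Type*} [Fintype γ] [DecidableEq γ]

noncomputable def empirical (v : Fin n → γ) (y : γ) : ℝ := (#{j | v j = y} : ℝ) / n

theorem isPMF_empirical (hn : n ≠ 0) (v : Fin n → γ) : IsPMF (empirical v) := by
  refine ⟨fun y => by unfold empirical; positivity, ?_⟩
  have h := card_eq_sum_card_fiberwise (f := v) (s := univ) (t := univ) fun _ _ => mem_univ _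
  simp only [card_univ, Fintype.card_fin] at h
  simp only [empirical, ← sum_div]
  rw [div_eq_one_iff_eq (Nat.cast_ne_zero.2 hn)]
  exact_mod_cast h.symm

theorem card_support_empirical_le (v : Fin n → γ) : #{y | empirical v y ≠ 0} ≤ n := by
  calc #{y | empirical v y ≠ 0} ≤ #(univ.image v) := card_le_card fun y hy => by
        obtain ⟨j, hj⟩ :=
          card_ne_zero.1 (Nat.cast_ne_zero.1 (left_ne_zero_of_mul (mem_filter.1 hy).2))
        exact mem_image.2 ⟨j, mem_univ _, (mem_filter.1 hj).2⟩
    _ ≤ n := card_image_le.trans (by simp)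

theorem entropy_empirical_le (hn : n ≠ 0) (v : Fin n → γ) :
    entropy (empirical v) ≤ log (min n (Fintype.card γ) : ℕ) := by
  have hpos : 0 < (#{y | empirical v y ≠ 0} : ℝ) := by
    obtain ⟨y, -, hy⟩ :=
      exists_ne_zero_of_sum_ne_zero ((isPMF_empirical hn v).2.trans_ne one_ne_zero)
    exact_mod_cast card_pos.2 ⟨y, mem_filter.2 ⟨mem_univ _, hy⟩⟩
  refine (entropy_le_log_card_support (isPMF_empirical hn v)).trans (log_le_log hpos ?_)
  exact_mod_cast le_min (card_support_empirical_le v) (card_le_univ _)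

theorem sum_empirical_sq (v : Fin n → γ) :
    ∑ y, empirical v y ^ 2 = (∑ j, ∑ j', if v j = v j' then 1 else 0) / (n : ℝ) ^ 2 := by
  have hcoll (j j' : Fin n) :
      ∑ y, (if v j = y ∧ v j' = y then (1 : ℝ) else 0) = if v j = v j' then 1 else 0 := by
    by_cases h : v j = v j'
    · simp [h]
    · simp [h, Ne.symm h]
  simp only [empirical, div_pow, ← sum_div]
  simp only [natCast_card_filter, sq, sum_mul_sum, ite_zero_mul_ite_zero, mul_one]
  rw [sum_comm]
  simp only [← hcoll]
  exact congrArg (· / _) (sum_congr rfl fun j _ => sum_comm)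

end Empirical

theorem margin_empirical {n d N : ℕ} (v : Fin n → Fin N → Fin d) (S : Finset (Fin N)) :
    margin (empirical v) S = empirical (S.restrict ∘ v) := by
  funext y
  have hfib := card_eq_sum_card_fiberwise (f := v) (s := {j | S.restrict (v j) = y})
    (t := {x | S.restrict x = y}) fun j hj => by simpa using hj
  have hR (x : Fin N → Fin d) : (∀ i : S, x i = y i) ↔ S.restrict x = y := funext_iff.symm
  simp only [margin, empirical, Function.comp_apply, hR, hfib]
  push_cast
  rw [sum_div, sum_filter]
  refine sum_congr rfl fun x _ => ?_
  split_ifs with hx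
  · congr 3
    ext j
    simp only [mem_filter, mem_univ, true_and]
    exact ⟨fun h => ⟨h ▸ hx, h⟩, And.right⟩
  · rfl

theorem card_filter_restrict_eq_mul_card {ι β : Type*} [Fintype ι] [DecidableEq ι] [Fintype β]
    [DecidableEq β] (S : Finset ι) (y : S → β) :
    #{x : ι → β | S.restrict x = y} * Fintype.card (S → β) = Fintype.card (ι → β) := by
  let e := Equiv.piEquivPiSubtypeProd (· ∈ S) fun _ => β
  have hfib : #{x : ι → β | S.restrict x = y} = Fintype.card ({i // i ∉ S} → β) := by
    rw [card_filter, Fintype.sum_equiv e (fun x => if S.restrict x = y then 1 else 0)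
      (fun q => if q.1 = y then 1 else 0) fun _ => rfl, Fintype.sum_prod_type, sum_comm]
    simp
  rw [hfib, mul_comm, ← Fintype.card_prod, Fintype.card_congr e]

section Tuples

variable {ι Ω M : Type*} [Fintype ι] [DecidableEq ι] [Fintype Ω] [AddCommMonoid M]

theorem sum_pi_apply (j : ι) (g : Ω → M) :
    ∑ a : ι → Ω, g (a j) = Fintype.card Ω ^ (Fintype.card ι - 1) • ∑ u, g u := by
  rw [Fintype.sum_equiv (Equiv.funSplitAt j Ω) (fun a => g (a j)) (fun q => g q.1) fun _ => rfl,
    Fintype.sum_prod_type]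
  simp [Fintype.card_subtype_compl, smul_sum]

theorem sum_pi_apply_apply {j j' : ι} (hj : j ≠ j') (F : Ω → Ω → M) :
    ∑ a : ι → Ω, F (a j) (a j')
      = Fintype.card Ω ^ (Fintype.card ι - 2) • ∑ u, ∑ u', F u u' := by
  rw [Fintype.sum_equiv (Equiv.funSplitAt j Ω) (fun a => F (a j) (a j'))
    (fun q => F q.1 (q.2 ⟨j', hj.symm⟩)) fun _ => rfl, Fintype.sum_prod_type]
  simp only [sum_pi_apply (ι := {i // i ≠ j}) ⟨j', hj.symm⟩, Fintype.card_subtype_compl,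
    Fintype.card_unique, Nat.sub_sub, smul_sum]

end Tuples

section Collisions

variable {Ω γ : Type*} [Fintype Ω] [Nonempty Ω] [Fintype γ] [DecidableEq γ]

theorem sum_pi_ite_apply_eq_apply_le {n : ℕ} (f : Ω → γ)
    (hf : ∀ y, #{u | f u = y} * Fintype.card γ = Fintype.card Ω) (j j' : Fin n) :
    ∑ a : Fin n → Ω, (if f (a j) = f (a j') then 1 else 0 : ℝ)
      ≤ (if j = j' then (Fintype.card Ω : ℝ) ^ n else 0)
        + (Fintype.card Ω : ℝ) ^ n / Fintype.card γ := by
  have hγ : (0 : ℝ) < Fintype.card γ := by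
    have : Nonempty γ := ⟨f (Classical.arbitrary Ω)⟩
    exact_mod_cast Fintype.card_pos
  obtain rfl | hj := eq_or_ne j j'
  · simp only [if_true, sum_const, card_univ, Fintype.card_fun, Fintype.card_fin, nsmul_eq_mul,
      mul_one, Nat.cast_pow, le_add_iff_nonneg_right]
    positivity
  have hfib (u : Ω) :
      ∑ u', (if f u = f u' then 1 else 0 : ℝ) = Fintype.card Ω / Fintype.card γ := by
    rw [eq_div_iff hγ.ne', ← natCast_card_filter]
    simp only [eq_comm (a := f u)]
    exact_mod_cast hf (f u)
  have hn : 2 ≤ n := by have := j.2; have := j'.2; have := Fin.val_ne_of_ne hj; omega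
  rw [sum_pi_apply_apply hj fun u u' => if f u = f u' then 1 else 0, if_neg hj, zero_add]
  simp only [hfib, sum_const, card_univ, Fintype.card_fin, nsmul_eq_mul]
  obtain ⟨k, rfl⟩ : ∃ k, n = k + 2 := ⟨n - 2, by omega⟩
  rw [Nat.add_sub_cancel]
  push_cast
  exact le_of_eq (by ring)

theorem sum_sum_empirical_comp_sq_le {n : ℕ} (hn : n ≠ 0) (f : Ω → γ)
    (hf : ∀ y, #{u | f u = y} * Fintype.card γ = Fintype.card Ω) :
    ∑ a : Fin n → Ω, ∑ y, empirical (f ∘ a) y ^ 2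
      ≤ (Fintype.card Ω : ℝ) ^ n * (1 / n + 1 / Fintype.card γ) := by
  have hn' : (0 : ℝ) < n := by positivity
  simp only [sum_empirical_sq, ← sum_div, Function.comp_apply]
  rw [div_le_iff₀ (by positivity)]
  calc ∑ a : Fin n → Ω, ∑ j, ∑ j', (if f (a j) = f (a j') then 1 else 0 : ℝ)
      = ∑ j, ∑ j', ∑ a : Fin n → Ω, (if f (a j) = f (a j') then 1 else 0 : ℝ) := by
        rw [sum_comm]; exact sum_congr rfl fun _ _ => sum_comm
    _ ≤ ∑ j : Fin n, ∑ j' : Fin n, ((if j = j' then (Fintype.card Ω : ℝ) ^ n else 0)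
          + (Fintype.card Ω : ℝ) ^ n / Fintype.card γ) :=
        sum_le_sum fun j _ => sum_le_sum fun j' _ => sum_pi_ite_apply_eq_apply_le f hf j j'
    _ = (Fintype.card Ω : ℝ) ^ n * (1 / n + 1 / Fintype.card γ) * (n : ℝ) ^ 2 := by
        simp only [sum_add_distrib, sum_ite_eq, mem_univ, if_true, sum_const, card_univ,
          Fintype.card_fin, nsmul_eq_mul]
        field_simp

end Collisions

section Gap

variable {n : ℕ} {Ω γ : Type*} [Fintype γ] [DecidableEq γ]

noncomputable def entropyGap (f : Ω → γ) (a : Fin n → Ω) : ℝ :=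
  log (min n (Fintype.card γ) : ℕ) - entropy (empirical (f ∘ a))

theorem entropyGap_nonneg (hn : n ≠ 0) (f : Ω → γ) (a : Fin n → Ω) :
    0 ≤ entropyGap f a :=
  sub_nonneg.2 (entropy_empirical_le hn _)

theorem sum_entropyGap_le [Fintype Ω] [Nonempty Ω] (hn : n ≠ 0) (f : Ω → γ)
    (hf : ∀ y, #{u | f u = y} * Fintype.card γ = Fintype.card Ω) :
    ∑ a : Fin n → Ω, entropyGap f a ≤ (Fintype.card Ω : ℝ) ^ n * log 2 := by
  set A := (Fintype.card Ω : ℝ) ^ n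
  set M : ℝ := ((min n (Fintype.card γ) : ℕ) : ℝ)
  have hA : 0 < A := by positivity
  have hM : 0 < M := by
    have : Nonempty γ := ⟨f (Classical.arbitrary Ω)⟩
    simp only [M]; exact_mod_cast lt_min (Nat.pos_of_ne_zero hn) Fintype.card_pos
  have hgap (a : Fin n → Ω) :
      entropyGap f a ≤ log M + log (∑ y, empirical (f ∘ a) y ^ 2) := by
    have := neg_log_sum_sq_le_entropy (isPMF_empirical hn (f ∘ a))
    rw [entropyGap]; linarith
  have hlogs : ∑ a : Fin n → Ω, log (∑ y, empirical (f ∘ a) y ^ 2)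
      ≤ A * log (1 / n + 1 / Fintype.card γ) := by
    have hcoll (a : Fin n → Ω) := (isPMF_empirical hn (f ∘ a)).sum_sq_pos
    refine (sum_log_le_card_mul_log_average hcoll).trans ?_
    simp only [Fintype.card_fun, Fintype.card_fin, Nat.cast_pow]
    gcongr
    · exact div_pos (sum_pos (fun a _ => hcoll a) univ_nonempty) hA
    · rw [div_le_iff₀' hA]; exact sum_sum_empirical_comp_sq_le hn f hf
  have hM2 : M * (1 / n + 1 / Fintype.card γ) ≤ 2 := by
    have h₁ : M / n ≤ 1 :=
      div_le_one_of_le₀ (by simp only [M]; exact_mod_cast min_le_left _ _) (by positivity)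
    have h₂ : M / Fintype.card γ ≤ 1 :=
      div_le_one_of_le₀ (by simp only [M]; exact_mod_cast min_le_right _ _) (by positivity)
    rw [mul_add, mul_one_div, mul_one_div]; linarith
  calc ∑ a, entropyGap f a
      ≤ ∑ a : Fin n → Ω, (log M + log (∑ y, empirical (f ∘ a) y ^ 2)) :=
        sum_le_sum fun a _ => hgap a
    _ ≤ A * (log M + log (1 / n + 1 / Fintype.card γ)) := by
        rw [sum_add_distrib, sum_const, card_univ, Fintype.card_fun, Fintype.card_fin,
          nsmul_eq_mul]
        push_cast; linarith
    _ ≤ A * log 2 := by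
        rw [← log_mul hM.ne' (by positivity)]
        exact mul_le_mul_of_nonneg_left (log_le_log (by positivity) hM2) hA.le

end Gap

theorem sum_finset_one_div_choose_card_mul {ι : Type*} [Fintype ι] (g : ℕ → ℝ) :
    ∑ S : Finset ι, 1 / ((Fintype.card ι).choose #S : ℝ) * g #S
      = ∑ k ∈ range (Fintype.card ι + 1), g k := by
  rw [← powerset_univ,
    sum_powerset_apply_card (fun k => 1 / ((Fintype.card ι).choose k : ℝ) * g k), card_univ]
  refine sum_congr rfl fun k hk => ?_
  have : ((Fintype.card ι).choose k : ℝ) ≠ 0 :=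
    Nat.cast_ne_zero.2 (Nat.choose_pos (Nat.lt_succ_iff.1 (mem_range.1 hk))).ne'
  rw [nsmul_eq_mul]; field_simp

theorem two_mul_sum_range_min_add {m N : ℕ} (hm : m ≤ N) :
    2 * ∑ k ∈ range (N + 1), min m k + m * m = m * (2 * N + 1) := by
  induction N, hm using Nat.le_induction with
  | base =>
    have h := sum_range_id_mul_two (m + 1)
    rw [sum_congr rfl fun k hk => min_eq_right (Nat.lt_succ_iff.1 (mem_range.1 hk))]
    simp only [Nat.add_sub_cancel] at h
    nlinarith [h]
  | succ N hmN ih =>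
    rw [sum_range_succ, min_eq_left (by omega)]
    nlinarith [ih]

theorem sum_range_min_add_min_sub {m N : ℕ} (hm : m ≤ N) :
    ∑ k ∈ range (N + 1), ((min m k : ℕ) + (min m (N - k) : ℕ) - m : ℝ) = m * (N - m) := by
  have hrefl : ∑ k ∈ range (N + 1), min m (N - k) = ∑ k ∈ range (N + 1), min m k := by
    rw [← sum_range_reflect]; exact sum_congr rfl fun k hk => by
      rw [Nat.add_sub_cancel]; congr 1; have := mem_range.1 hk; omega
  have h := two_mul_sum_range_min_add hm
  simp only [sum_sub_distrib, sum_add_distrib, sum_const, card_range, nsmul_eq_mul]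
  rw [← Nat.cast_sum, ← Nat.cast_sum, hrefl]
  set s := ∑ k ∈ range (N + 1), min m k
  have h' : 2 * (s : ℝ) + m * m = m * (2 * N + 1) := by exact_mod_cast h
  push_cast
  linarith

theorem log_min_pow {d : ℕ} [NeZero d] (m k : ℕ) :
    log ((min (d ^ m) (d ^ k) : ℕ) : ℝ) = (min m k : ℕ) * log d := by
  rw [← (pow_right_mono₀ (NeZero.one_le (n := d))).map_min, Nat.cast_pow, log_pow]

section Construction

variable {d N m : ℕ} [NeZero d] (a : Fin (d ^ m) → Fin N → Fin d)

theorem entropy_margin_empirical (S : Finset (Fin N)) :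
    entropy (margin (empirical a) S) = (min m #S : ℕ) * log d - entropyGap S.restrict a := by
  rw [entropyGap, margin_empirical, Fintype.card_fun, Fintype.card_coe, Fintype.card_fin,
    log_min_pow]
  ring

theorem entropy_empirical_eq (hm : m ≤ N) :
    entropy (empirical a) = m * log d - entropyGap id a := by
  rw [entropyGap, Function.id_comp, Fintype.card_fun, Fintype.card_fin, Fintype.card_fin,
    log_min_pow, min_eq_left hm]
  ring

theorem MIS_empirical (hm : m ≤ N) (S : Finset (Fin N)) :
    MIS (empirical a) S = ((min m #S : ℕ) + (min m (N - #S) : ℕ) - m : ℝ) * log d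
      - (entropyGap S.restrict a + entropyGap Sᶜ.restrict a) + entropyGap id a := by
  rw [MIS, entropy_margin_empirical, entropy_margin_empirical, entropy_empirical_eq a hm,
    card_compl, Fintype.card_fin]
  ring

noncomputable def subsystemGap : ℝ :=
  1 / (N + 1 : ℝ) * ∑ S : Finset (Fin N),
    1 / (N.choose #S : ℝ) * (entropyGap S.restrict a + entropyGap Sᶜ.restrict a)

theorem subsystemGap_nonneg : 0 ≤ subsystemGap a := by
  have h (S : Finset (Fin N)) := entropyGap_nonneg (NeZero.ne (d ^ m)) S.restrict a
  unfold subsystemGap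
  exact mul_nonneg (by positivity) (sum_nonneg fun S _ => mul_nonneg (by positivity)
    (add_nonneg (h S) (h Sᶜ)))

theorem neural_empirical (hm : m ≤ N) :
    neural (empirical a) = m * (N - m) / (N + 1) * log d + entropyGap id a - subsystemGap a := by
  have hsum := sum_finset_one_div_choose_card_mul (ι := Fin N)
    fun k => ((min m k : ℕ) + (min m (N - k) : ℕ) - m : ℝ) * log d + entropyGap id a
  simp only [Fintype.card_fin, sum_add_distrib, ← sum_mul, sum_range_min_add_min_sub hm,
    sum_const, card_range, nsmul_eq_mul] at hsum
  simp only [neural, subsystemGap, MIS_empirical a hm, sub_add_eq_add_sub, mul_sub, sum_sub_distrib,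
    hsum]
  field_simp
  push_cast
  ring

theorem sum_subsystemGap_le :
    ∑ a : Fin (d ^ m) → Fin N → Fin d, subsystemGap a
      ≤ (Fintype.card (Fin N → Fin d) : ℝ) ^ d ^ m * (2 * log 2) := by
  set A := (Fintype.card (Fin N → Fin d) : ℝ) ^ d ^ m
  have hS (S : Finset (Fin N)) :
      ∑ a : Fin (d ^ m) → Fin N → Fin d, entropyGap S.restrict a ≤ A * log 2 :=
    sum_entropyGap_le (NeZero.ne _) _ (card_filter_restrict_eq_mul_card S)
  have hconst := sum_finset_one_div_choose_card_mul (ι := Fin N) fun _ => A * (2 * log 2)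
  simp only [Fintype.card_fin, sum_const, card_range, nsmul_eq_mul] at hconst
  simp only [subsystemGap, ← mul_sum]
  rw [sum_comm]
  calc 1 / (N + 1 : ℝ) * ∑ S : Finset (Fin N), ∑ a : Fin (d ^ m) → Fin N → Fin d,
        1 / (N.choose #S : ℝ) * (entropyGap S.restrict a + entropyGap Sᶜ.restrict a)
      ≤ 1 / (N + 1 : ℝ) * ∑ S : Finset (Fin N),
          1 / (N.choose #S : ℝ) * (A * (2 * log 2)) := by
        gcongr with S
        rw [← mul_sum, sum_add_distrib]
        gcongr
        linarith [hS S, hS Sᶜ]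
    _ = A * (2 * log 2) := by
        rw [hconst]; push_cast; field_simp

theorem exists_entropyGap_add_subsystemGap_le :
    ∃ a : Fin (d ^ m) → Fin N → Fin d, entropyGap id a + subsystemGap a ≤ 3 * log 2 := by
  have hid := sum_entropyGap_le (NeZero.ne (d ^ m)) (id : (Fin N → Fin d) → _)
    fun y => by simp [filter_eq']
  have hsub := sum_subsystemGap_le (d := d) (N := N) (m := m)
  obtain ⟨a, -, ha⟩ := exists_le_of_sum_le (s := univ) univ_nonempty
    (f := fun a => entropyGap id a + subsystemGap a) (g := fun _ => 3 * log 2) (by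
      simp only [sum_add_distrib, sum_const, card_univ, Fintype.card_fun, Fintype.card_fin,
        nsmul_eq_mul] at hid hsub ⊢
      push_cast at hid hsub ⊢
      linarith)
  exact ⟨a, ha⟩

theorem exists_isPMF_entropy_neural_near (hm : m ≤ N) :
    ∃ μ : (Fin N → Fin d) → ℝ, IsPMF μ ∧ |entropy μ - m * log d| ≤ 3 * log 2 ∧
      |neural μ - m * (N - m) / (N + 1) * log d| ≤ 3 * log 2 := by
  obtain ⟨a, ha⟩ := exists_entropyGap_add_subsystemGap_le (d := d) (N := N) (m := m)
  have hid := entropyGap_nonneg (NeZero.ne (d ^ m)) id a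
  have hsub := subsystemGap_nonneg a
  refine ⟨empirical a, isPMF_empirical (NeZero.ne _) a, ?_, ?_⟩
  · rw [entropy_empirical_eq a hm, abs_le]; constructor <;> linarith
  · rw [neural_empirical a hm, abs_le]; constructor <;> linarith

end Construction

theorem tendsto_div_of_abs_sub_le {f g D : ℕ → ℝ} {C L : ℝ} (h : ∀ N, |f N - g N| ≤ C)
    (hD : Tendsto D atTop atTop) (hg : Tendsto (fun N => g N / D N) atTop (nhds L)) :
    Tendsto (fun N => f N / D N) atTop (nhds L) := by
  have herr : Tendsto (fun N => (f N - g N) / D N) atTop (nhds 0) := by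
    refine squeeze_zero_norm' ?_ ((tendsto_const_nhds (x := C)).div_atTop hD)
    filter_upwards [hD.eventually_gt_atTop 0] with N hN
    rw [Real.norm_eq_abs, abs_div, abs_of_pos hN]
    exact div_le_div_of_nonneg_right (h N) hN.le
  simpa [sub_div] using hg.add herr

theorem tendsto_natFloor_mul_div_natCast {x : ℝ} (hx : 0 ≤ x) :
    Tendsto (fun N : ℕ => (⌊x * N⌋₊ : ℝ) / N) atTop (nhds x) :=
  (tendsto_nat_floor_mul_div_atTop hx).comp tendsto_natCast_atTop_atTop

/-- For every integer `d ≥ 2` and every `x ∈ [0,1]`, there exists a sequence of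
probability measures `μ^N ∈ M(d,N)` with `H(μ^N)/(N log d) → x` and
`I(μ^N)/(N log d) → x(1−x)`, where `I` is the neural complexity. -/
theorem stmt2 (d : ℕ) (hd : 2 ≤ d) (x : ℝ) (hx : x ∈ Set.Icc (0:ℝ) 1) :
    ∃ μ : (N : ℕ) → (Fin N → Fin d) → ℝ, (∀ N, IsPMF (μ N)) ∧
      Tendsto (fun N : ℕ => entropy (μ N) / (N * Real.log d)) atTop (nhds x) ∧
      Tendsto (fun N : ℕ => neural (μ N) / (N * Real.log d)) atTop (nhds (x * (1 - x))) := by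
  obtain ⟨hx₀, hx₁⟩ := hx
  have : NeZero d := ⟨by omega⟩
  have hlog : 0 < log d := log_pos (by exact_mod_cast hd)
  have hm (N : ℕ) : ⌊x * N⌋₊ ≤ N :=
    Nat.floor_le_of_le (mul_le_of_le_one_left N.cast_nonneg hx₁)
  choose μ hμ hent hneural using fun N => exists_isPMF_entropy_neural_near (d := d) (hm N)
  have hD : Tendsto (fun N : ℕ => N * log d) atTop atTop :=
    tendsto_natCast_atTop_atTop.atTop_mul_const hlog
  have hfloor := tendsto_natFloor_mul_div_natCast hx₀
  refine ⟨μ, hμ, tendsto_div_of_abs_sub_le hent hD ?_,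
    tendsto_div_of_abs_sub_le hneural hD ?_⟩
  · simpa only [mul_div_mul_right _ _ hlog.ne'] using hfloor
  · have hlim := hfloor.mul (((tendsto_const_nhds (x := (1 : ℝ))).sub hfloor).mul
      (tendsto_natCast_div_add_atTop (1 : ℝ)))
    rw [mul_one] at hlim
    refine hlim.congr' ?_
    filter_upwards [eventually_ne_atTop 0] with N hN
    field_simp
end

section
/- Let d ≥ 2 and x ∈ [0,1]. For any sequence μ^N ∈ M(d,N) that is an approximate x-maximizer for the neural complexity, sup_{t∈[0,1]} |h_{μ^N}(t) − h*_x(t)| → 0 as N → ∞. In particular, for any sequence μ^N ∈ M(d,N) with lim_{N→∞} I(μ^N)/N = (log d)/4, one has lim_{N→∞} H(μ^N)/(N log d) = 1/2 and lim_{N→∞} sup_{t∈[0,1]} |h_{μ^N}(t) − h*_{1/2}(t)| = 0. -/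
open Filter

/-!
Normalize the average entropy of the `k`-subsystems to `a k = avgEntropy μ k / (N log d)` and put
`y = a N`. The bounds `H(X_S) ≤ H(X_T) ≤ H(X_S) + #(T \ S) log d` for `S ⊆ T`, averaged over the
layers of the subset lattice, make `a` nondecreasing with `a 0 = 0` and increments at most
`1 / N`; hence `a k ≤ min y (k / N)`. The neural complexity is `I / (N log d) = 2 · mean a - y`,
and the Riemann sum `mean (min y (k / N))` is `y - y² / 2 + O(1 / N)`, so the mean deficit
`E = mean (min y (k / N) - a k)` equals `y - y² / 2 - (I / (N log d) + y) / 2 + O(1 / N)`, which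
tends to `0` along an approximate `x`-maximizer. The deficit is nonnegative and `1 / N`-Lipschitz
in `k`, so its maximum is at most `√(8 E)`; the profile interpolates `a`, hence converges
uniformly to `min x t`. For the second claim, `E ≥ 0` gives
`I / (N log d) ≤ 1/4 - (y - 1/2)² + O(1 / N)`, which forces `y → 1/2`.
-/

open Finset

section Pushforward

variable {α β γ : Type*} [Fintype α] [DecidableEq β] [DecidableEq γ]

noncomputable def pushfwd (f : α → β) (p : α → ℝ) : β → ℝ :=
  fun b => ∑ a, if f a = b then p a else 0

lemma pushfwd_nonneg {f : α → β} {p : α → ℝ} (hp : ∀ a, 0 ≤ p a) (b : β) :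
    0 ≤ pushfwd f p b :=
  sum_nonneg fun a _ => ite_nonneg (hp a) le_rfl

lemma le_pushfwd {f : α → β} {p : α → ℝ} (hp : ∀ a, 0 ≤ p a) (a : α) :
    p a ≤ pushfwd f p (f a) := by
  calc p a = if f a = f a then p a else 0 := (if_pos rfl).symm
    _ ≤ pushfwd f p (f a) :=
      single_le_sum (f := fun a' => if f a' = f a then p a' else 0)
        (fun a' _ => ite_nonneg (hp a') le_rfl) (mem_univ a)

variable [Fintype β]

lemma sum_pushfwd_mul (f : α → β) (p : α → ℝ) (F : β → ℝ) :
    ∑ b, pushfwd f p b * F b = ∑ a, p a * F (f a) := by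
  simp only [pushfwd, sum_mul, ite_mul, zero_mul]
  rw [sum_comm]
  simp

lemma sum_pushfwd (f : α → β) (p : α → ℝ) : ∑ b, pushfwd f p b = ∑ a, p a := by
  simpa using sum_pushfwd_mul f p 1

lemma pushfwd_comp (f : α → β) (g : β → γ) (p : α → ℝ) :
    pushfwd g (pushfwd f p) = pushfwd (g ∘ f) p := by
  funext c
  simpa [pushfwd, mul_ite] using sum_pushfwd_mul f p fun b => if g b = c then 1 else 0

lemma IsPMF.pushfwd {p : α → ℝ} (hp : IsPMF p) (f : α → β) : IsPMF (pushfwd f p) :=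
  ⟨pushfwd_nonneg hp.1, by rw [sum_pushfwd, hp.2]⟩

lemma entropy_pushfwd_le (f : α → β) {p : α → ℝ} (hp : ∀ a, 0 ≤ p a) :
    entropy (pushfwd f p) ≤ entropy p := by
  rw [entropy, entropy, neg_le_neg_iff, sum_pushfwd_mul f p fun b => Real.log (pushfwd f p b)]
  refine sum_le_sum fun a _ => ?_
  rcases (hp a).eq_or_lt with h | h
  · simp [← h]
  · exact mul_le_mul_of_nonneg_left (Real.log_le_log h (le_pushfwd hp a)) h.le

lemma entropy_le_neg_sum_mul_log {p q : α → ℝ} (hp : IsPMF p) (hq : ∀ a, 0 ≤ q a)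
    (hq1 : ∑ a, q a ≤ 1) (hpq : ∀ a, 0 < p a → 0 < q a) :
    entropy p ≤ -∑ a, p a * Real.log (q a) := by
  have key : ∀ a, p a * Real.log (q a) - p a * Real.log (p a) ≤ q a - p a := by
    intro a
    rcases (hp.1 a).eq_or_lt with h | h
    · simp [← h, hq a]
    · calc p a * Real.log (q a) - p a * Real.log (p a) = p a * Real.log (q a / p a) := by
            rw [Real.log_div (hpq a h).ne' h.ne', mul_sub]
        _ ≤ p a * (q a / p a - 1) :=
            mul_le_mul_of_nonneg_left (Real.log_le_sub_one_of_pos (div_pos (hpq a h) h)) h.le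
        _ = q a - p a := by field_simp
  have := sum_le_sum fun a (_ : a ∈ univ) => key a
  rw [sum_sub_distrib, sum_sub_distrib, hp.2] at this
  rw [entropy]
  linarith

lemma entropy_le_entropy_pushfwd_add_log (f : α → β) {p : α → ℝ} (hp : IsPMF p) {m : ℕ}
    (hm : 0 < m) (hfib : ∀ b, #{a | f a = b} ≤ m) :
    entropy p ≤ entropy (pushfwd f p) + Real.log m := by
  have hm' : (0 : ℝ) < m := by exact_mod_cast hm
  have hq1 : ∑ a, pushfwd f p (f a) / m ≤ 1 := by
    have hcard : ∀ b, pushfwd f (fun _ => 1) b ≤ m := fun b => by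
      simpa [pushfwd, sum_boole] using hfib b
    calc ∑ a, pushfwd f p (f a) / m
        = ∑ b, pushfwd f (fun _ => 1) b * (pushfwd f p b / m) := by
          simpa using (sum_pushfwd_mul f (fun _ => 1) fun b => pushfwd f p b / m).symm
      _ ≤ ∑ b, m * (pushfwd f p b / m) := sum_le_sum fun b _ =>
          mul_le_mul_of_nonneg_right (hcard b) (div_nonneg (pushfwd_nonneg hp.1 b) hm'.le)
      _ = 1 := by simp_rw [mul_div_cancel₀ _ hm'.ne']; exact (hp.pushfwd f).2
  have hgibbs := entropy_le_neg_sum_mul_log hp (q := fun a => pushfwd f p (f a) / m)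
    (fun a => div_nonneg (pushfwd_nonneg hp.1 _) hm'.le) hq1
    (fun a ha => div_pos (ha.trans_le (le_pushfwd hp.1 a)) hm')
  have hsplit : ∀ a, p a * Real.log (pushfwd f p (f a) / m)
      = p a * Real.log (pushfwd f p (f a)) - p a * Real.log m := by
    intro a
    rcases (hp.1 a).eq_or_lt with h | h
    · simp [← h]
    · rw [Real.log_div (h.trans_le (le_pushfwd hp.1 a)).ne' hm'.ne', mul_sub]
  rw [Finset.sum_congr rfl fun a _ => hsplit a, sum_sub_distrib, ← sum_mul, hp.2, one_mul,
    ← sum_pushfwd_mul f p fun b => Real.log (pushfwd f p b)] at hgibbs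
  simp only [entropy] at hgibbs ⊢
  linarith

lemma entropy_pushfwd_of_injective {f : α → β} (hf : Function.Injective f) {p : α → ℝ}
    (hp : IsPMF p) : entropy (pushfwd f p) = entropy p := by
  refine le_antisymm (entropy_pushfwd_le f hp.1) ?_
  have := entropy_le_entropy_pushfwd_add_log f hp one_pos fun b =>
    card_le_one.2 fun a ha a' ha' => hf ((mem_filter.1 ha).2.trans (mem_filter.1 ha').2.symm)
  simpa using this

end Pushforward

lemma card_filter_restrict₂_eq_le {ι β : Type*} [DecidableEq ι] [Fintype β] [DecidableEq β]
    {S T : Finset ι} (h : S ⊆ T) (z : S → β) :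
    #{y : T → β | restrict₂ (π := fun _ => β) h y = z} ≤ Fintype.card β ^ #(T \ S) := by
  have hinj : Set.InjOn (restrict₂ (π := fun _ => β) (sdiff_subset (s := T) (t := S)))
      (({y : T → β | restrict₂ (π := fun _ => β) h y = z} : Finset _) : Set (T → β)) := by
    intro y hy y' hy' heq
    simp only [coe_filter, mem_univ, true_and] at hy hy'
    funext i
    by_cases hi : i.1 ∈ S
    · exact congrFun (hy.trans hy'.symm) ⟨i, hi⟩
    · exact congrFun heq ⟨i, mem_sdiff.2 ⟨i.2, hi⟩⟩
  simpa using card_le_card_of_injOn _ (fun _ _ => mem_coe.2 (mem_univ _)) hinj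

section Margin

variable {d N : ℕ} {μ : (Fin N → Fin d) → ℝ}

lemma margin_eq_pushfwd (μ : (Fin N → Fin d) → ℝ) (S : Finset (Fin N)) :
    margin μ S = pushfwd S.restrict μ := by
  funext y
  simp only [margin, pushfwd, funext_iff]
  rfl

lemma margin_eq_pushfwd_margin (μ : (Fin N → Fin d) → ℝ) {S T : Finset (Fin N)} (h : S ⊆ T) :
    margin μ S = pushfwd (restrict₂ (π := fun _ => Fin d) h) (margin μ T) := by
  rw [margin_eq_pushfwd, margin_eq_pushfwd, pushfwd_comp, restrict₂_comp_restrict]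

lemma IsPMF.margin (hμ : IsPMF μ) (S : Finset (Fin N)) : IsPMF (margin μ S) := by
  rw [margin_eq_pushfwd]
  exact hμ.pushfwd _

lemma entropy_margin_mono (hμ : IsPMF μ) {S T : Finset (Fin N)} (h : S ⊆ T) :
    entropy (margin μ S) ≤ entropy (margin μ T) := by
  rw [margin_eq_pushfwd_margin μ h]
  exact entropy_pushfwd_le _ (hμ.margin T).1

lemma entropy_margin_le_add (hd : 0 < d) (hμ : IsPMF μ) {S T : Finset (Fin N)} (h : S ⊆ T) :
    entropy (margin μ T) ≤ entropy (margin μ S) + #(T \ S) * Real.log d := by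
  have := entropy_le_entropy_pushfwd_add_log (restrict₂ (π := fun _ => Fin d) h) (hμ.margin T)
    (pow_pos hd _) fun z => by simpa using card_filter_restrict₂_eq_le h z
  rwa [← margin_eq_pushfwd_margin, Nat.cast_pow, Real.log_pow] at this

lemma entropy_margin_empty (hμ : IsPMF μ) : entropy (margin μ ∅) = 0 := by
  simp [entropy, margin, hμ.2]

lemma entropy_margin_univ (hμ : IsPMF μ) : entropy (margin μ univ) = entropy μ := by
  rw [margin_eq_pushfwd]
  exact entropy_pushfwd_of_injective (fun x x' h => funext fun i => congrFun h ⟨i, mem_univ i⟩) hμ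

end Margin

section LayerAverage

variable {ι : Type*} [Fintype ι]

noncomputable def layerAverage (F : Finset ι → ℝ) (k : ℕ) : ℝ :=
  (1 / ((Fintype.card ι).choose k : ℝ)) * ∑ S ∈ powersetCard k univ, F S

lemma layerAverage_zero (F : Finset ι → ℝ) : layerAverage F 0 = F ∅ := by
  simp [layerAverage]

lemma layerAverage_card (F : Finset ι → ℝ) : layerAverage F (Fintype.card ι) = F univ := by
  simp [layerAverage, ← card_univ, powersetCard_self]

lemma layerAverage_const (c : ℝ) {k : ℕ} (hk : k ≤ Fintype.card ι) :
    layerAverage (ι := ι) (fun _ => c) k = c := by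
  have : ((Fintype.card ι).choose k : ℝ) ≠ 0 := by exact_mod_cast (Nat.choose_pos hk).ne'
  simp [layerAverage, field]

lemma sum_one_div_choose_mul_eq_sum_layerAverage (F : Finset ι → ℝ) :
    ∑ S, 1 / ((Fintype.card ι).choose #S : ℝ) * F S
      = ∑ k ∈ range (Fintype.card ι + 1), layerAverage F k := by
  rw [← powerset_univ, sum_powerset, card_univ]
  refine sum_congr rfl fun k _ => ?_
  rw [layerAverage, mul_sum]
  exact sum_congr rfl fun S hS => by rw [(mem_powersetCard.1 hS).2]

variable [DecidableEq ι]

lemma sum_one_div_choose_mul_compl (F : Finset ι → ℝ) :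
    ∑ S, 1 / ((Fintype.card ι).choose #S : ℝ) * F Sᶜ
      = ∑ S, 1 / ((Fintype.card ι).choose #S : ℝ) * F S :=
  Fintype.sum_bijective compl compl_bijective _ _ fun S => by
    rw [card_compl, Nat.choose_symm (card_le_univ S)]

lemma card_filter_subset_powersetCard_succ {S : Finset ι} {k : ℕ} (hS : #S = k) :
    #{T ∈ powersetCard (k + 1) univ | S ⊆ T} = Fintype.card ι - k := by
  have : {T ∈ powersetCard (k + 1) (univ : Finset ι) | S ⊆ T} = Sᶜ.image (insert · S) := by
    ext T
    simp only [mem_filter, mem_powersetCard, subset_univ, true_and, mem_image, mem_compl]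
    rw [← hS, exists_eq_insert_iff]
    tauto
  rw [this, card_image_of_injOn (insert_inj_on' S), card_compl, hS]

lemma sum_powersetCard_succ_sum_powersetCard (F : Finset ι → ℝ) (k : ℕ) :
    ∑ T ∈ powersetCard (k + 1) univ, ∑ S ∈ powersetCard k T, F S
      = (Fintype.card ι - k : ℕ) * ∑ S ∈ powersetCard k univ, F S := by
  rw [sum_comm' (t' := powersetCard k univ)
    (s' := fun S => {T ∈ powersetCard (k + 1) univ | S ⊆ T}), mul_sum]
  · refine sum_congr rfl fun S hS => ?_
    rw [sum_const, card_filter_subset_powersetCard_succ (mem_powersetCard.1 hS).2, nsmul_eq_mul]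
  · intro T S
    simp only [mem_powersetCard, mem_filter, subset_univ, true_and]
    tauto

/-- Double counting: a `k`-set lies in `n - k` sets of size `k + 1`, and a `(k + 1)`-set contains
`k + 1` sets of size `k`. -/
lemma layerAverage_succ_sub (F : Finset ι → ℝ) {k : ℕ} (hk : k < Fintype.card ι) :
    layerAverage F (k + 1) - layerAverage F k
      = (∑ T ∈ powersetCard (k + 1) univ, ∑ S ∈ powersetCard k T, (F T - F S))
        / ((k + 1) * (Fintype.card ι).choose (k + 1)) := by
  have hpairs : ∀ T ∈ powersetCard (k + 1) (univ : Finset ι),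
      ∑ S ∈ powersetCard k T, F T = (k + 1) * F T := fun T hT => by
    rw [sum_const, card_powersetCard, (mem_powersetCard.1 hT).2, Nat.choose_succ_self_right,
      nsmul_eq_mul]
    push_cast; ring
  have hchoose : ((Fintype.card ι).choose (k + 1) * (k + 1) : ℝ)
      = (Fintype.card ι).choose k * (Fintype.card ι - k : ℕ) := by
    exact_mod_cast Nat.choose_succ_right_eq _ k
  have h0 : ((Fintype.card ι).choose k : ℝ) ≠ 0 := by exact_mod_cast (Nat.choose_pos hk.le).ne'
  have h1 : ((Fintype.card ι).choose (k + 1) : ℝ) ≠ 0 := by exact_mod_cast (Nat.choose_pos hk).ne'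
  have h2 : ((Fintype.card ι - k : ℕ) : ℝ) ≠ 0 := by
    have : 0 < Fintype.card ι - k := by omega
    positivity
  simp only [sum_sub_distrib]
  rw [sum_congr rfl hpairs, ← mul_sum, sum_powersetCard_succ_sum_powersetCard, layerAverage,
    layerAverage]
  field_simp
  linear_combination (-∑ S ∈ powersetCard k univ, F S) * hchoose

lemma layerAverage_le_layerAverage_succ {F : Finset ι → ℝ} (hF : ∀ S T, S ⊆ T → F S ≤ F T)
    {k : ℕ} (hk : k < Fintype.card ι) : layerAverage F k ≤ layerAverage F (k + 1) := by
  rw [← sub_nonneg, layerAverage_succ_sub F hk]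
  refine div_nonneg (sum_nonneg fun T _ => sum_nonneg fun S hS => ?_) (by positivity)
  exact sub_nonneg.2 (hF S T (mem_powersetCard.1 hS).1)

lemma layerAverage_succ_le_add {F : Finset ι → ℝ} {c : ℝ}
    (hF : ∀ S T, S ⊆ T → F T ≤ F S + #(T \ S) * c) {k : ℕ} (hk : k < Fintype.card ι) :
    layerAverage F (k + 1) ≤ layerAverage F k + c := by
  rw [← sub_le_iff_le_add', layerAverage_succ_sub F hk,
    div_le_iff₀ (by have := Nat.choose_pos hk; positivity)]
  calc ∑ T ∈ powersetCard (k + 1) univ, ∑ S ∈ powersetCard k T, (F T - F S)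
      ≤ ∑ T ∈ powersetCard (k + 1) (univ : Finset ι), ∑ S ∈ powersetCard k T, c := by
        refine sum_le_sum fun T hT => sum_le_sum fun S hS => ?_
        obtain ⟨hST, hS⟩ := mem_powersetCard.1 hS
        have := hF S T hST
        rw [card_sdiff_of_subset hST, (mem_powersetCard.1 hT).2, hS, Nat.add_sub_cancel_left,
          Nat.cast_one, one_mul] at this
        linarith
    _ = c * ((k + 1) * (Fintype.card ι).choose (k + 1)) := by
        rw [sum_congr rfl fun T hT => by
          rw [sum_const, card_powersetCard, (mem_powersetCard.1 hT).2, Nat.choose_succ_self_right]]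
        simp only [nsmul_eq_mul, Nat.cast_add, Nat.cast_one, sum_const, card_powersetCard,
          card_univ]
        ring

end LayerAverage

section Neural

variable {d N : ℕ}

lemma avgEntropy_eq_layerAverage (μ : (Fin N → Fin d) → ℝ) (k : ℕ) :
    avgEntropy μ k = layerAverage (fun S => entropy (margin μ S)) k := by
  simp [avgEntropy, layerAverage]

lemma neural_eq (μ : (Fin N → Fin d) → ℝ) :
    neural μ = 2 / (N + 1) * ∑ k ∈ range (N + 1), avgEntropy μ k - entropy μ := by
  have hF := sum_one_div_choose_mul_eq_sum_layerAverage fun S : Finset (Fin N) =>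
    entropy (margin μ S)
  have hFc := sum_one_div_choose_mul_compl fun S : Finset (Fin N) => entropy (margin μ S)
  have hH := sum_one_div_choose_mul_eq_sum_layerAverage fun _ : Finset (Fin N) => entropy μ
  rw [sum_congr rfl fun k hk => layerAverage_const _ (Nat.lt_succ_iff.1 (mem_range.1 hk))] at hH
  simp only [Fintype.card_fin] at hF hFc hH
  simp only [neural, MIS, mul_sub, mul_add, sum_sub_distrib, sum_add_distrib, hFc, hF, hH,
    avgEntropy_eq_layerAverage, sum_const, card_range, nsmul_eq_mul]
  field_simp
  push_cast
  ring

end Neural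

lemma sum_range_min_div_eq {N : ℕ} (hN : 0 < N) {y : ℝ} (hy0 : 0 ≤ y) (hy1 : y ≤ 1) :
    ∑ k ∈ range (N + 1), min y ((k : ℝ) / N)
      = ⌊N * y⌋₊ * (⌊N * y⌋₊ + 1) / (2 * N) + (N - ⌊N * y⌋₊) * y := by
  have hN' : (0 : ℝ) < N := by exact_mod_cast hN
  set K := ⌊N * y⌋₊
  have hK : (K : ℝ) ≤ N * y := Nat.floor_le (by positivity)
  have hK' : N * y < K + 1 := Nat.lt_floor_add_one _
  have hKN : K ≤ N := by exact_mod_cast hK.trans (by nlinarith : (N : ℝ) * y ≤ N)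
  have hgauss : (∑ k ∈ range (K + 1), (k : ℝ)) * 2 = ((K : ℝ) + 1) * K := by
    have := sum_range_id_mul_two (K + 1)
    rw [Nat.add_sub_cancel] at this
    have h := congrArg (Nat.cast : ℕ → ℝ) this
    push_cast at h
    exact h
  have hlow : ∀ k ∈ range (K + 1), min y ((k : ℝ) / N) = k / N := fun k hk => by
    have : (k : ℝ) ≤ K := by exact_mod_cast Nat.lt_succ_iff.1 (mem_range.1 hk)
    exact min_eq_right (by rw [div_le_iff₀ hN']; linarith)
  have hhigh : ∀ k ∈ Ico (K + 1) (N + 1), min y ((k : ℝ) / N) = y := fun k hk => by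
    have : (K : ℝ) + 1 ≤ k := by exact_mod_cast (mem_Ico.1 hk).1
    exact min_eq_left (by rw [le_div_iff₀ hN']; linarith)
  rw [← sum_range_add_sum_Ico _ (by omega : K + 1 ≤ N + 1), sum_congr rfl hlow,
    sum_congr rfl hhigh, ← sum_div, sum_const, Nat.card_Ico, nsmul_eq_mul,
    Nat.cast_sub (by omega : K + 1 ≤ N + 1)]
  field_simp
  push_cast
  linear_combination hgauss

lemma abs_mean_min_sub_le {N : ℕ} (hN : 0 < N) {y : ℝ} (hy0 : 0 ≤ y) (hy1 : y ≤ 1) :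
    |1 / ((N : ℝ) + 1) * ∑ k ∈ range (N + 1), min y ((k : ℝ) / N) - (y - y ^ 2 / 2)|
      ≤ 1 / ((N : ℝ) + 1) := by
  have hN' : (0 : ℝ) < N := by exact_mod_cast hN
  set K := ⌊N * y⌋₊
  have hK : (K : ℝ) ≤ N * y := Nat.floor_le (by positivity)
  have hK' : N * y < K + 1 := Nat.lt_floor_add_one _
  have hexcess : ∑ k ∈ range (N + 1), min y ((k : ℝ) / N) - (N + 1) * (y - y ^ 2 / 2)
      = ((K - N * y) ^ 2 + K) / (2 * N) - (y - y ^ 2 / 2) := by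
    rw [sum_range_min_div_eq hN hy0 hy1]
    field_simp
    ring
  have h0 : 0 ≤ ((K - N * y) ^ 2 + K) / (2 * N) := by positivity
  have h1 : ((K - N * y) ^ 2 + K) / (2 * N) ≤ 1 := by
    rw [div_le_one (by positivity)]
    nlinarith
  have hmean : 1 / ((N : ℝ) + 1) * ∑ k ∈ range (N + 1), min y ((k : ℝ) / N) - (y - y ^ 2 / 2)
      = (∑ k ∈ range (N + 1), min y ((k : ℝ) / N) - (N + 1) * (y - y ^ 2 / 2)) / (N + 1) := by
    field_simp
  rw [hmean, hexcess, abs_div, abs_of_pos (by positivity : (0 : ℝ) < N + 1)]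
  gcongr
  rw [abs_le]
  constructor <;> nlinarith

lemma mul_sq_le_four_mul_sum_of_two_mul_le {N : ℕ} (hN : 0 < N) {g : ℕ → ℝ} (hg0 : ∀ k ≤ N, 0 ≤ g k)
    (hg : ∀ k < N, |g (k + 1) - g k| ≤ 1 / N) {j : ℕ} (hj : 2 * j ≤ N) (hgj : g j ≤ 1) :
    N * g j ^ 2 ≤ 4 * ∑ k ∈ range (N + 1), g k := by
  have hgj0 : 0 ≤ g j := hg0 j (by omega)
  set K := ⌊N * g j / 2⌋₊
  have hK : (K : ℝ) ≤ N * g j / 2 := Nat.floor_le (by positivity)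
  have hK' : N * g j / 2 < K + 1 := Nat.lt_floor_add_one _
  have hjK : j + K ≤ N := by
    have : (2 * j : ℕ) ≤ (N : ℝ) := by exact_mod_cast hj
    have : ((j + K : ℕ) : ℝ) ≤ N := by push_cast at *; nlinarith
    exact_mod_cast this
  have hwindow : ∀ k ∈ Icc j (j + K), g j / 2 ≤ g k := by
    intro k hk
    obtain ⟨hjk, hkK⟩ := mem_Icc.1 hk
    have hdist := dist_le_Ico_sum_of_dist_le (f := g) (d := fun _ => 1 / (N : ℝ)) hjk
      fun {i} _ hi => by rw [dist_comm, Real.dist_eq]; exact hg i (by omega)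
    rw [sum_const, Nat.card_Ico, nsmul_eq_mul, Real.dist_eq] at hdist
    have hkj : ((k - j : ℕ) : ℝ) ≤ K := by exact_mod_cast (by omega : k - j ≤ K)
    have hN' : (0 : ℝ) < N := by exact_mod_cast hN
    have : ((k - j : ℕ) : ℝ) * (1 / N) ≤ g j / 2 := by
      rw [mul_one_div, div_le_iff₀ hN']; nlinarith
    linarith [le_abs_self (g j - g k)]
  calc N * g j ^ 2 = 4 * ((N * g j / 2) * (g j / 2)) := by ring
    _ ≤ 4 * ((K + 1) * (g j / 2)) := by gcongr
    _ = 4 * (#(Icc j (j + K)) • (g j / 2)) := by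
        rw [Nat.card_Icc, nsmul_eq_mul, show j + K + 1 - j = K + 1 by omega]; push_cast; ring
    _ ≤ 4 * ∑ k ∈ Icc j (j + K), g k := by gcongr; exact card_nsmul_le_sum _ _ _ hwindow
    _ ≤ 4 * ∑ k ∈ range (N + 1), g k := by
        refine mul_le_mul_of_nonneg_left
          (sum_le_sum_of_subset_of_nonneg (fun k hk => ?_) fun k hk _ => ?_) (by norm_num)
        · simp only [mem_Icc, mem_range] at hk ⊢; omega
        · exact hg0 k (Nat.lt_succ_iff.1 (mem_range.1 hk))

lemma sq_le_eight_mul_mean_of_abs_sub_le {N : ℕ} (hN : 0 < N) {g : ℕ → ℝ}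
    (hg0 : ∀ k ≤ N, 0 ≤ g k) (hg : ∀ k < N, |g (k + 1) - g k| ≤ 1 / N) {j : ℕ} (hj : j ≤ N)
    (hgj : g j ≤ 1) : g j ^ 2 ≤ 8 * (1 / (N + 1) * ∑ k ∈ range (N + 1), g k) := by
  have hsum : N * g j ^ 2 ≤ 4 * ∑ k ∈ range (N + 1), g k := by
    rcases le_or_gt (2 * j) N with h | h
    · exact mul_sq_le_four_mul_sum_of_two_mul_le hN hg0 hg h hgj
    · -- reflect: `k ↦ g (N - k)` has `N - j` in its left half
      have hrefl := mul_sq_le_four_mul_sum_of_two_mul_le hN (g := fun k => g (N - k))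
        (fun k hk => hg0 _ (by omega))
        (fun k hk => by
          have := hg (N - (k + 1)) (by omega)
          rwa [show N - (k + 1) + 1 = N - k by omega, abs_sub_comm] at this)
        (j := N - j) (by omega) (by rwa [Nat.sub_sub_self hj])
      simpa [Nat.sub_sub_self hj, ← sum_range_reflect g (N + 1)] using hrefl
  have hN' : (1 : ℝ) ≤ N := by exact_mod_cast hN
  have hS : 0 ≤ ∑ k ∈ range (N + 1), g k :=
    sum_nonneg fun k hk => hg0 k (Nat.lt_succ_iff.1 (mem_range.1 hk))
  rw [show 8 * (1 / ((N : ℝ) + 1) * ∑ k ∈ range (N + 1), g k)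
      = (8 * ∑ k ∈ range (N + 1), g k) / (N + 1) by ring, le_div_iff₀ (by positivity)]
  nlinarith

structure IsDiscreteProfile (N : ℕ) (a : ℕ → ℝ) : Prop where
  zero : a 0 = 0
  mono : ∀ k < N, a k ≤ a (k + 1)
  succ_le : ∀ k < N, a (k + 1) ≤ a k + 1 / N

noncomputable def meanDeficit (N : ℕ) (a : ℕ → ℝ) : ℝ :=
  1 / (N + 1) * ∑ k ∈ range (N + 1), (min (a N) (k / N) - a k)

namespace IsDiscreteProfile

variable {N : ℕ} {a : ℕ → ℝ}

lemma monotoneOn (ha : IsDiscreteProfile N a) : MonotoneOn a (Set.Iic N) :=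
  monotoneOn_of_le_add_one Set.ordConnected_Iic fun k _ _ hk => ha.mono k hk

lemma nonneg (ha : IsDiscreteProfile N a) {k : ℕ} (hk : k ≤ N) : 0 ≤ a k :=
  ha.zero ▸ ha.monotoneOn (Set.mem_Iic.2 (Nat.zero_le N)) hk (Nat.zero_le k)

lemma le_last (ha : IsDiscreteProfile N a) {k : ℕ} (hk : k ≤ N) : a k ≤ a N :=
  ha.monotoneOn hk (Set.mem_Iic.2 le_rfl) hk

lemma le_div (ha : IsDiscreteProfile N a) {k : ℕ} (hk : k ≤ N) : a k ≤ k / N := by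
  have hanti : AntitoneOn (fun k : ℕ => a k - k / N) (Set.Iic N) :=
    antitoneOn_of_add_one_le Set.ordConnected_Iic fun k _ _ hk => by
      have := ha.succ_le k hk
      push_cast
      rw [add_div]
      linarith
  simpa [ha.zero] using hanti (Set.mem_Iic.2 (Nat.zero_le N)) hk (Nat.zero_le k)

lemma last_le_one (ha : IsDiscreteProfile N a) : a N ≤ 1 :=
  (ha.le_div le_rfl).trans (div_self_le_one _)

lemma meanDeficit_nonneg (ha : IsDiscreteProfile N a) : 0 ≤ meanDeficit N a :=
  mul_nonneg (by positivity) <| sum_nonneg fun k hk => by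
    have hk := Nat.lt_succ_iff.1 (mem_range.1 hk)
    exact sub_nonneg.2 (le_min (ha.le_last hk) (ha.le_div hk))

lemma abs_sub_min_le (ha : IsDiscreteProfile N a) (hN : 0 < N) {j : ℕ} (hj : j ≤ N) :
    |a j - min (a N) (j / N)| ≤ √(8 * meanDeficit N a) := by
  set g : ℕ → ℝ := fun k => min (a N) (k / N) - a k
  have hg0 : ∀ k ≤ N, 0 ≤ g k := fun k hk => sub_nonneg.2 (le_min (ha.le_last hk) (ha.le_div hk))
  have hg : ∀ k < N, |g (k + 1) - g k| ≤ 1 / N := by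
    intro k hk
    have hN' : (0 : ℝ) < 1 / N := by positivity
    have hstep : ((k + 1 : ℕ) : ℝ) / N = k / N + 1 / N := by push_cast; rw [add_div]
    have hmin₁ : min (a N) (k / N) ≤ min (a N) ((k + 1 : ℕ) / N) :=
      min_le_min_left _ (by rw [hstep]; linarith)
    have hmin₂ : min (a N) ((k + 1 : ℕ) / N) ≤ min (a N) (k / N) + 1 / N := by
      rw [← min_add_add_right, hstep]
      exact min_le_min (by linarith) le_rfl
    have := ha.mono k hk
    have := ha.succ_le k hk
    rw [abs_le]
    constructor <;> linarith
  have hgj : g j ≤ 1 := by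
    have := min_le_right (a N) (j / N)
    have := div_le_one_of_le₀ (show (j : ℝ) ≤ N by exact_mod_cast hj) (Nat.cast_nonneg N)
    linarith [ha.nonneg hj]
  rw [abs_sub_comm, abs_of_nonneg (hg0 j hj), Real.le_sqrt (hg0 j hj) (by
    have := ha.meanDeficit_nonneg; positivity)]
  exact sq_le_eight_mul_mean_of_abs_sub_le hN hg0 hg hj hgj

end IsDiscreteProfile

/-- The piecewise-affine interpolation of the points `(k / N, a k)`. -/
noncomputable def interpolate (N : ℕ) (a : ℕ → ℝ) (t : ℝ) : ℝ :=
  a (⌈t * N⌉.toNat - 1)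
    + (t * N - ((⌈t * N⌉.toNat - 1 : ℕ) : ℝ)) * (a ⌈t * N⌉.toNat - a (⌈t * N⌉.toNat - 1))

lemma abs_interpolate_sub_le {N : ℕ} (hN : 0 < N) {a : ℕ → ℝ} {f : ℝ → ℝ}
    (hf : LipschitzWith 1 f) {B : ℝ} (hB : ∀ k ≤ N, |a k - f (k / N)| ≤ B) {t : ℝ}
    (ht0 : 0 < t) (ht1 : t ≤ 1) : |interpolate N a t - f t| ≤ B + 1 / N := by
  have hN' : (0 : ℝ) < N := by exact_mod_cast hN
  have hceil : 0 < ⌈t * N⌉ := Int.ceil_pos.2 (by positivity)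
  obtain ⟨K, hK⟩ : ∃ K : ℕ, ⌈t * N⌉.toNat = K + 1 := ⟨⌈t * N⌉.toNat - 1, by omega⟩
  have hKceil : (K : ℝ) + 1 = ⌈t * N⌉ := by
    have : ((K + 1 : ℕ) : ℤ) = ⌈t * N⌉ := hK ▸ Int.toNat_of_nonneg hceil.le
    exact_mod_cast this
  have hlo : (K : ℝ) < t * N := by linarith [Int.ceil_lt_add_one (t * N)]
  have hup : t * N ≤ K + 1 := hKceil ▸ Int.le_ceil _
  have hKN : K + 1 ≤ N := by
    have : ⌈t * N⌉ ≤ N := Int.ceil_le.2 (by push_cast; nlinarith)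
    omega
  have hnode : ∀ i ≤ N, |(i : ℝ) - t * N| ≤ 1 → dist (a i) (f t) ≤ B + 1 / N := by
    intro i hi hit
    have hlip : |f (i / N) - f t| ≤ |(i : ℝ) / N - t| := by
      simpa [Real.dist_eq] using hf.dist_le_mul (i / N) t
    have hit' : |(i : ℝ) / N - t| ≤ 1 / N := by
      rw [show (i : ℝ) / N - t = (i - t * N) / N by field_simp, abs_div, abs_of_pos hN']
      gcongr
    rw [Real.dist_eq]
    calc |a i - f t| ≤ |a i - f (i / N)| + |f (i / N) - f t| := abs_sub_le _ _ _
      _ ≤ B + 1 / N := add_le_add (hB i hi) (hlip.trans hit')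
  have hmem := (convex_closedBall (f t) (B + 1 / N)).add_smul_sub_mem
    (hnode K (by omega) (by rw [abs_le]; constructor <;> linarith))
    (hnode (K + 1) hKN (by push_cast; rw [abs_le]; constructor <;> linarith))
    (⟨by linarith, by linarith⟩ : t * N - K ∈ Set.Icc 0 1)
  rw [interpolate, hK, Nat.add_sub_cancel, ← Real.dist_eq]
  simpa using hmem

section EntropyProfile

variable {d N : ℕ} {μ : (Fin N → Fin d) → ℝ}

noncomputable def profileNode (μ : (Fin N → Fin d) → ℝ) (k : ℕ) : ℝ :=
  avgEntropy μ k / (N * Real.log d)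

lemma profile_eq_interpolate (μ : (Fin N → Fin d) → ℝ) {t : ℝ} (ht : 0 < t) :
    profile μ t = interpolate N (profileNode μ) t := by
  rw [profile, if_neg ht.not_ge, interpolate]
  simp only [profileNode]
  ring

lemma profileNode_last (hμ : IsPMF μ) : profileNode μ N = entropy μ / (N * Real.log d) := by
  have := layerAverage_card fun S : Finset (Fin N) => entropy (margin μ S)
  rw [Fintype.card_fin] at this
  rw [profileNode, avgEntropy_eq_layerAverage, this, entropy_margin_univ hμ]

lemma isDiscreteProfile_profileNode (hd : 1 < d) (hμ : IsPMF μ) :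
    IsDiscreteProfile N (profileNode μ) := by
  have hlog : 0 < Real.log d := Real.log_pos (by exact_mod_cast hd)
  refine ⟨?_, fun k hk => ?_, fun k hk => ?_⟩
  · rw [profileNode, avgEntropy_eq_layerAverage, layerAverage_zero, entropy_margin_empty hμ,
      zero_div]
  · simp only [profileNode, avgEntropy_eq_layerAverage]
    gcongr
    exact layerAverage_le_layerAverage_succ (fun S T h => entropy_margin_mono hμ h)
      (by simpa using hk)
  · rcases N.eq_zero_or_pos with rfl | hN
    · simp [profileNode]
    have := layerAverage_succ_le_add (c := Real.log d)
      (fun S T h => entropy_margin_le_add (by omega) hμ h) (k := k) (by simpa using hk)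
    simp only [profileNode, avgEntropy_eq_layerAverage]
    rw [show 1 / (N : ℝ) = Real.log d / (N * Real.log d) by field_simp, ← add_div]
    gcongr

lemma neural_div_eq (hμ : IsPMF μ) :
    neural μ / (N * Real.log d)
      = 2 / (N + 1) * ∑ k ∈ range (N + 1), profileNode μ k - profileNode μ N := by
  rw [neural_eq, profileNode_last hμ]
  simp only [profileNode, ← sum_div]
  ring

lemma meanDeficit_profileNode (hμ : IsPMF μ) :
    meanDeficit N (profileNode μ)
      = 1 / (N + 1) * ∑ k ∈ range (N + 1), min (profileNode μ N) ((k : ℝ) / N)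
        - (neural μ / (N * Real.log d) + profileNode μ N) / 2 := by
  rw [meanDeficit, neural_div_eq hμ, sum_sub_distrib]
  ring

lemma abs_profile_sub_min_le (hd : 1 < d) (hμ : IsPMF μ) (hN : 0 < N) {x : ℝ} (hx : 0 ≤ x)
    {t : ℝ} (ht : t ∈ Set.Icc (0 : ℝ) 1) :
    |profile μ t - min x t|
      ≤ √(8 * meanDeficit N (profileNode μ)) + |profileNode μ N - x| + 1 / N := by
  rcases ht.1.eq_or_lt with rfl | ht0
  · simp [profile, min_eq_right hx]
    positivity
  have ha := isDiscreteProfile_profileNode hd hμ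
  rw [profile_eq_interpolate μ ht0]
  refine abs_interpolate_sub_le hN (LipschitzWith.id.const_min x) (fun k hk => ?_) ht0 ht.2
  calc |profileNode μ k - min x (k / N)|
      ≤ |profileNode μ k - min (profileNode μ N) (k / N)|
        + |min (profileNode μ N) (k / N) - min x (k / N)| := abs_sub_le _ _ _
    _ ≤ √(8 * meanDeficit N (profileNode μ)) + |profileNode μ N - x| :=
        add_le_add (ha.abs_sub_min_le hN hk)
          (by simpa using abs_min_sub_min_le_max (profileNode μ N) ((k : ℝ) / N) x ((k : ℝ) / N))

end EntropyProfile

section Limits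

open Topology

variable {d : ℕ} {μ : (N : ℕ) → (Fin N → Fin d) → ℝ}

lemma tendsto_mean_min {y : ℕ → ℝ} (hy : ∀ N, y N ∈ Set.Icc (0 : ℝ) 1) {x : ℝ}
    (h : Tendsto y atTop (𝓝 x)) :
    Tendsto (fun N : ℕ => 1 / ((N : ℝ) + 1) * ∑ k ∈ range (N + 1), min (y N) ((k : ℝ) / N))
      atTop (𝓝 (x - x ^ 2 / 2)) := by
  refine (h.sub ((h.pow 2).div_const 2)).congr_dist
    (squeeze_zero' (Eventually.of_forall fun N => dist_nonneg) ?_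
      tendsto_one_div_add_atTop_nhds_zero_nat)
  filter_upwards [eventually_gt_atTop 0] with N hN
  rw [dist_comm, Real.dist_eq]
  exact abs_mean_min_sub_le hN (hy N).1 (hy N).2

lemma tendsto_iSup_abs_profile_sub_min (hd : 1 < d) {x : ℝ} (hx : x ∈ Set.Icc (0 : ℝ) 1)
    (hμ : ∀ N, IsPMF (μ N))
    (hH : Tendsto (fun N : ℕ => entropy (μ N) / (N * Real.log d)) atTop (𝓝 x))
    (hI : Tendsto (fun N : ℕ => neural (μ N) / (N * Real.log d)) atTop (𝓝 (x * (1 - x)))) :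
    Tendsto (fun N : ℕ => ⨆ t : Set.Icc (0 : ℝ) 1, |profile (μ N) t - min x t|)
      atTop (𝓝 0) := by
  have ha N := isDiscreteProfile_profileNode hd (hμ N)
  have hy : Tendsto (fun N => profileNode (μ N) N) atTop (𝓝 x) := by
    simpa only [profileNode_last (hμ _)] using hH
  have hE : Tendsto (fun N => meanDeficit N (profileNode (μ N))) atTop (𝓝 0) := by
    simp only [meanDeficit_profileNode (hμ _)]
    convert (tendsto_mean_min (fun N => ⟨(ha N).nonneg le_rfl, (ha N).last_le_one⟩) hy).sub
      ((hI.add hy).div_const 2) using 2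
    ring
  have hbound : Tendsto (fun N : ℕ => √(8 * meanDeficit N (profileNode (μ N)))
      + |profileNode (μ N) N - x| + 1 / N) atTop (𝓝 0) := by
    simpa using ((((hE.const_mul 8).sqrt).add (hy.sub_const x).abs).add
      tendsto_one_div_atTop_nhds_zero_nat)
  refine squeeze_zero' (Eventually.of_forall fun N => Real.iSup_nonneg fun t => abs_nonneg _)
    ?_ hbound
  filter_upwards [eventually_gt_atTop 0] with N hN
  have : Nonempty (Set.Icc (0 : ℝ) 1) := ⟨⟨0, by norm_num, by norm_num⟩⟩
  exact ciSup_le fun t => abs_profile_sub_min_le hd (hμ N) hN hx.1 t.2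

lemma tendsto_entropy_div_of_tendsto_neural_div (hd : 1 < d) (hμ : ∀ N, IsPMF (μ N))
    (hI : Tendsto (fun N : ℕ => neural (μ N) / (N * Real.log d)) atTop (𝓝 (1 / 4))) :
    Tendsto (fun N : ℕ => entropy (μ N) / (N * Real.log d)) atTop (𝓝 (1 / 2)) := by
  have ha N := isDiscreteProfile_profileNode hd (hμ N)
  simp only [← profileNode_last (hμ _)]
  -- `E ≥ 0` gives `I / (N log d) ≤ y - y² + 2 / (N + 1) = 1/4 - (y - 1/2)² + 2 / (N + 1)`
  have hsq : ∀ᶠ N : ℕ in atTop, ‖profileNode (μ N) N - 1 / 2‖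
      ≤ √(1 / 4 - neural (μ N) / (N * Real.log d) + 2 * (1 / ((N : ℝ) + 1))) := by
    filter_upwards [eventually_gt_atTop 0] with N hN
    have hmean := abs_mean_min_sub_le hN ((ha N).nonneg le_rfl) (ha N).last_le_one
    have hE := (ha N).meanDeficit_nonneg
    rw [meanDeficit_profileNode (hμ N)] at hE
    rw [Real.norm_eq_abs]
    refine Real.abs_le_sqrt ?_
    nlinarith [(abs_le.1 hmean).2]
  refine tendsto_sub_nhds_zero_iff.1 (squeeze_zero_norm' hsq ?_)
  simpa using (((tendsto_const_nhds (x := (1 / 4 : ℝ))).sub hI).add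
    (tendsto_one_div_add_atTop_nhds_zero_nat.const_mul 2)).sqrt

end Limits

/-- For `d ≥ 2` and `x ∈ [0,1]`, any approximate `x`-maximizer `μ^N ∈ M(d,N)`
for the neural complexity satisfies `sup_{t∈[0,1]} |h_{μ^N}(t) − h*_x(t)| → 0`.
In particular any sequence with `I(μ^N)/N → (log d)/4` satisfies
`H(μ^N)/(N log d) → 1/2` and `sup_{t∈[0,1]} |h_{μ^N}(t) − h*_{1/2}(t)| → 0`. -/
theorem stmt3 (d : ℕ) (hd : 2 ≤ d) :
    (∀ x ∈ Set.Icc (0:ℝ) 1, ∀ μ : (N : ℕ) → (Fin N → Fin d) → ℝ, (∀ N, IsPMF (μ N)) →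
      Tendsto (fun N : ℕ => entropy (μ N) / (N * Real.log d)) atTop (nhds x) →
      Tendsto (fun N : ℕ => neural (μ N) / (N * Real.log d)) atTop (nhds (x * (1 - x))) →
      Tendsto (fun N : ℕ => ⨆ t : Set.Icc (0:ℝ) 1, |profile (μ N) t - min x t|)
        atTop (nhds 0)) ∧
    (∀ μ : (N : ℕ) → (Fin N → Fin d) → ℝ, (∀ N, IsPMF (μ N)) →
      Tendsto (fun N : ℕ => neural (μ N) / N) atTop (nhds (Real.log d / 4)) →
      (Tendsto (fun N : ℕ => entropy (μ N) / (N * Real.log d)) atTop (nhds (1/2)) ∧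
       Tendsto (fun N : ℕ => ⨆ t : Set.Icc (0:ℝ) 1, |profile (μ N) t - min (1/2 : ℝ) t|)
         atTop (nhds 0))) := by
  refine ⟨fun x hx μ hμ hH hI => tendsto_iSup_abs_profile_sub_min hd hx hμ hH hI,
    fun μ hμ hI => ?_⟩
  have hlog : Real.log d ≠ 0 := (Real.log_pos (by exact_mod_cast hd)).ne'
  have hI' : Tendsto (fun N : ℕ => neural (μ N) / (N * Real.log d)) atTop
      (nhds (1 / 2 * (1 - 1 / 2))) := by
    convert hI.div_const (Real.log d) using 1
    · simp only [div_div]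
    · field_simp
      norm_num
  have hH := tendsto_entropy_div_of_tendsto_neural_div hd hμ (by norm_num at hI'; exact hI')
  exact ⟨hH, tendsto_iSup_abs_profile_sub_min hd (by norm_num) hμ hH hI'⟩
end

section
/- Let I^c be a non-null intricacy. Then for all x ∈ [0,1] and all N ≥ 1, |i^c_N(x) − i^c(x)| ≤ 1/(2√N). -/
open Filter

open MeasureTheory

/-- The coefficients `c^N_k = ∫ t^k (1−t)^{N−k} λ(dt)` of an intricacy with representing
measure `λ`. -/
noncomputable def cNk (lam : Measure ℝ) (N k : ℕ) : ℝ :=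
  ∫ t, t ^ k * (1 - t) ^ (N - k) ∂lam

/-- `lam` is the representing measure of a non-null intricacy: a probability measure carried
by `[0,1]`, invariant under `t ↦ 1 − t`, with `λ((0,1)) > 0`. -/
def IsIntricacyMeasure (lam : Measure ℝ) : Prop :=
  IsProbabilityMeasure lam ∧ lam (Set.Icc (0:ℝ) 1)ᶜ = 0 ∧
    Measure.map (fun t : ℝ => 1 - t) lam = lam ∧ 0 < lam (Set.Ioo (0:ℝ) 1)

/-- The intricacy `I^c(X) = ∑_{S ⊆ {1,…,N}} c^N_{|S|} · MI(X_S, X_{Sᶜ})` with coefficients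
represented by `lam`. -/
noncomputable def intricacy (lam : Measure ℝ) {d N : ℕ} (μ : (Fin N → Fin d) → ℝ) : ℝ :=
  ∑ S : Finset (Fin N), cNk lam N S.card * MIS μ S

/-- `i^c_N(x) = 2 ∑_{k=0}^N c^N_k C(N,k) min{k/N, x} − x`. -/
noncomputable def icN (lam : Measure ℝ) (N : ℕ) (x : ℝ) : ℝ :=
  2 * ∑ k ∈ Finset.range (N + 1),
    cNk lam N k * (N.choose k : ℝ) * min ((k : ℝ) / N) x - x

/-- `i^c(x) = 2 ∫ min{t,x} λ(dt) − x`. -/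
noncomputable def ic (lam : Measure ℝ) (x : ℝ) : ℝ :=
  2 * ∫ t, min t x ∂lam - x

/-- `‖f‖_{c,N} = ∑_{k=0}^N c^N_k C(N,k) |f(k/N)|`. -/
noncomputable def cNorm (lam : Measure ℝ) (N : ℕ) (f : ℝ → ℝ) : ℝ :=
  ∑ k ∈ Finset.range (N + 1), cNk lam N k * (N.choose k : ℝ) * |f ((k : ℝ) / N)|

/-- The topological support of a measure on `ℝ`. -/
def mSupport (lam : Measure ℝ) : Set ℝ :=
  {x | ∀ U : Set ℝ, IsOpen U → x ∈ U → lam U ≠ 0}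

/-! With `b_{N,k}` the Bernstein basis,
`i^c_N(x) - i^c(x) = 2 ∫ (∑ₖ b_{N,k}(t) min(k/N, x) - min(t, x)) λ(dt)`, so it suffices
to bound the Bernstein approximation error of `min(·, x)` on `[0,1]` by `1/(4√N)`.
Since `min(a, x) = (a + x - |a - x|)/2` and Bernstein operators reproduce affine functions, the
error is half that of the `1`-Lipschitz function `|· - x|`, hence at most half the mean absolute
deviation `∑ₖ b_{N,k}(t) |k/N - t| ≤ √(t(1-t)/N) ≤ 1/(2√N)` (Cauchy–Schwarz and the binomial
variance). -/

open Finset MeasureTheory Polynomial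

theorem Continuous.integrable_of_ae_mem_compact {X E : Type*} [TopologicalSpace X]
    [MeasurableSpace X] [OpensMeasurableSpace X] [T2Space X] [NormedAddCommGroup E]
    {μ : Measure X} [IsFiniteMeasure μ] {K : Set X} (hK : IsCompact K) (hμ : ∀ᵐ t ∂μ, t ∈ K)
    {f : X → E} (hf : Continuous f) : Integrable f μ := by
  rw [← Measure.restrict_eq_self_of_ae_mem hμ]
  exact hf.continuousOn.integrableOn_compact hK

namespace bernsteinPolynomial

variable {N : ℕ} {t : ℝ}

theorem eval_nonneg (k : ℕ) (ht : t ∈ Set.Icc (0 : ℝ) 1) :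
    0 ≤ (bernsteinPolynomial ℝ N k).eval t := by
  simp only [bernsteinPolynomial, eval_mul, eval_pow, eval_sub, eval_one, eval_X, eval_natCast]
  exact mul_nonneg (mul_nonneg (Nat.cast_nonneg _) (pow_nonneg ht.1 _))
    (pow_nonneg (sub_nonneg.2 ht.2) _)

theorem sum_eval (N : ℕ) (t : ℝ) :
    ∑ k ∈ range (N + 1), (bernsteinPolynomial ℝ N k).eval t = 1 := by
  simpa [eval_finsetSum] using congrArg (eval t) (bernsteinPolynomial.sum ℝ N)

theorem sum_eval_mul_div (hN : N ≠ 0) :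
    ∑ k ∈ range (N + 1), (bernsteinPolynomial ℝ N k).eval t * (k / N) = t := by
  have h := congrArg (eval t) (bernsteinPolynomial.sum_smul ℝ N)
  simp only [eval_finsetSum, nsmul_eq_mul, eval_mul, eval_natCast, eval_X] at h
  calc _ = (∑ k ∈ range (N + 1), k * (bernsteinPolynomial ℝ N k).eval t) / N := by
        rw [sum_div]; exact sum_congr rfl fun k _ => by ring
    _ = t := by rw [h]; field_simp

theorem sum_eval_mul_div_sub_sq (hN : N ≠ 0) :
    ∑ k ∈ range (N + 1), (bernsteinPolynomial ℝ N k).eval t * ((k / N : ℝ) - t) ^ 2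
      = t * (1 - t) / N := by
  have h := congrArg (eval t) (bernsteinPolynomial.variance ℝ N)
  simp only [eval_finsetSum, eval_mul, eval_pow, eval_sub, eval_X, eval_one, eval_natCast,
    nsmul_eq_mul] at h
  have hN' : (N : ℝ) ≠ 0 := Nat.cast_ne_zero.2 hN
  rw [show t * (1 - t) / N = N * t * (1 - t) / N ^ 2 by field_simp, ← h, sum_div]
  refine sum_congr rfl fun k _ => ?_
  field_simp
  ring

theorem sum_eval_mul_abs_div_sub_le (hN : N ≠ 0) (ht : t ∈ Set.Icc (0 : ℝ) 1) :
    ∑ k ∈ range (N + 1), (bernsteinPolynomial ℝ N k).eval t * |(k / N : ℝ) - t|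
      ≤ 1 / (2 * √N) := by
  have hN' : (0 : ℝ) < N := Nat.cast_pos.2 (Nat.pos_of_ne_zero hN)
  have hsq : (∑ k ∈ range (N + 1), (bernsteinPolynomial ℝ N k).eval t * |(k / N : ℝ) - t|) ^ 2
      ≤ t * (1 - t) / N := by
    have := sum_sq_le_sum_mul_sum_of_sq_le_mul (range (N + 1))
      (fun k _ => eval_nonneg k ht) (fun k _ => mul_nonneg (eval_nonneg k ht) (sq_nonneg _))
      (r := fun k => (bernsteinPolynomial ℝ N k).eval t * |(k / N : ℝ) - t|)
      (g := fun k => (bernsteinPolynomial ℝ N k).eval t * ((k / N : ℝ) - t) ^ 2)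
      (fun k _ => le_of_eq (by rw [mul_pow, sq_abs]; ring))
    rwa [sum_eval, one_mul, sum_eval_mul_div_sub_sq hN] at this
  have hbound : t * (1 - t) / N ≤ (1 / (2 * √N)) ^ 2 := by
    rw [div_pow, mul_pow, Real.sq_sqrt hN'.le, div_le_div_iff₀ hN' (by positivity)]
    nlinarith [sq_nonneg (1 - 2 * t)]
  exact (pow_le_pow_iff_left₀ (sum_nonneg fun k _ => mul_nonneg (eval_nonneg k ht)
    (abs_nonneg _)) (by positivity) two_ne_zero).1 (hsq.trans hbound)

theorem abs_sum_eval_mul_min_sub_min_le (hN : N ≠ 0) (ht : t ∈ Set.Icc (0 : ℝ) 1) (x : ℝ) :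
    |∑ k ∈ range (N + 1), (bernsteinPolynomial ℝ N k).eval t * min (k / N : ℝ) x - min t x|
      ≤ 1 / (4 * √N) := by
  have hmin (a : ℝ) : min a x = (a + x - |a - x|) / 2 := by
    rcases le_total a x with h | h
    · rw [min_eq_left h, abs_of_nonpos (sub_nonpos.2 h)]; ring
    · rw [min_eq_right h, abs_of_nonneg (sub_nonneg.2 h)]; ring
  have hdiff : ∑ k ∈ range (N + 1), (bernsteinPolynomial ℝ N k).eval t * min (k / N : ℝ) x
      - min t x = -(∑ k ∈ range (N + 1),
        (bernsteinPolynomial ℝ N k).eval t * (|(k / N : ℝ) - x| - |t - x|)) / 2 := by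
    have hterm (k : ℕ) : (bernsteinPolynomial ℝ N k).eval t * min (k / N : ℝ) x
        = ((bernsteinPolynomial ℝ N k).eval t * (k / N) + (bernsteinPolynomial ℝ N k).eval t * x
          - (bernsteinPolynomial ℝ N k).eval t * |(k / N : ℝ) - x|) / 2 := by
      rw [hmin]; ring
    simp only [hterm, ← sum_div, sum_sub_distrib, sum_add_distrib, mul_sub, ← sum_mul,
      sum_eval_mul_div hN, sum_eval, hmin t]
    ring
  have hlip : |∑ k ∈ range (N + 1),
        (bernsteinPolynomial ℝ N k).eval t * (|(k / N : ℝ) - x| - |t - x|)|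
      ≤ ∑ k ∈ range (N + 1), (bernsteinPolynomial ℝ N k).eval t * |(k / N : ℝ) - t| := by
    refine (abs_sum_le_sum_abs _ _).trans (sum_le_sum fun k _ => ?_)
    rw [abs_mul, abs_of_nonneg (eval_nonneg k ht)]
    refine mul_le_mul_of_nonneg_left ((abs_abs_sub_abs_le_abs_sub _ _).trans ?_)
      (eval_nonneg k ht)
    rw [sub_sub_sub_cancel_right]
  rw [hdiff, abs_div, abs_neg, abs_two, div_le_iff₀ two_pos]
  calc _ ≤ 1 / (2 * √N) := hlip.trans (sum_eval_mul_abs_div_sub_le hN ht)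
    _ = 1 / (4 * √N) * 2 := by ring

end bernsteinPolynomial

theorem cNk_mul_choose (lam : Measure ℝ) (N k : ℕ) :
    cNk lam N k * N.choose k = ∫ t, (bernsteinPolynomial ℝ N k).eval t ∂lam := by
  rw [cNk, ← integral_mul_const]
  refine integral_congr_ae (ae_of_all _ fun t => ?_)
  simp only [bernsteinPolynomial, eval_mul, eval_pow, eval_sub, eval_one, eval_X, eval_natCast]
  ring

theorem icN_sub_ic_eq_integral (lam : Measure ℝ) [IsFiniteMeasure lam]
    (hlam : ∀ᵐ t ∂lam, t ∈ Set.Icc (0 : ℝ) 1) (N : ℕ) (x : ℝ) :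
    icN lam N x - ic lam x = 2 * ∫ t, (∑ k ∈ range (N + 1),
      (bernsteinPolynomial ℝ N k).eval t * min (k / N : ℝ) x - min t x) ∂lam := by
  have hint {f : ℝ → ℝ} (hf : Continuous f) : Integrable f lam :=
    hf.integrable_of_ae_mem_compact isCompact_Icc hlam
  rw [integral_sub (integrable_finsetSum _ fun k _ => hint (by fun_prop)) (hint (by fun_prop)),
    integral_finsetSum _ fun k _ => hint (by fun_prop), icN, ic]
  simp_rw [integral_mul_const, ← cNk_mul_choose]
  ring

theorem abs_icN_sub_ic_le (lam : Measure ℝ) [IsProbabilityMeasure lam]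
    (hlam : ∀ᵐ t ∂lam, t ∈ Set.Icc (0 : ℝ) 1) (x : ℝ) {N : ℕ} (hN : N ≠ 0) :
    |icN lam N x - ic lam x| ≤ 1 / (2 * √N) := by
  have hpt : ∀ᵐ t ∂lam, ‖∑ k ∈ range (N + 1), (bernsteinPolynomial ℝ N k).eval t
      * min (k / N : ℝ) x - min t x‖ ≤ 1 / (4 * √N) := by
    filter_upwards [hlam] with t ht
    exact bernsteinPolynomial.abs_sum_eval_mul_min_sub_min_le hN ht x
  have := norm_integral_le_of_norm_le_const hpt
  rw [probReal_univ, mul_one, Real.norm_eq_abs] at this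
  rw [icN_sub_ic_eq_integral lam hlam, abs_mul, abs_two]
  calc _ ≤ 2 * (1 / (4 * √N)) := by gcongr
    _ = 1 / (2 * √N) := by ring

theorem stmt8_general (lam : Measure ℝ) (hlam : IsIntricacyMeasure lam)
    (x : ℝ) (N : ℕ) (hN : 1 ≤ N) :
    |icN lam N x - ic lam x| ≤ 1 / (2 * Real.sqrt N) := by
  obtain ⟨hprob, hsupp, -, -⟩ := hlam
  exact abs_icN_sub_ic_le lam (ae_iff.2 hsupp) x (Nat.one_le_iff_ne_zero.1 hN)

/-- for a non-null intricacy, `|i^c_N(x) − i^c(x)| ≤ 1/(2√N)` for all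
`x ∈ [0,1]` and `N ≥ 1`. -/
theorem stmt8 (lam : Measure ℝ) (hlam : IsIntricacyMeasure lam)
    (x : ℝ) (hx : x ∈ Set.Icc (0:ℝ) 1) (N : ℕ) (hN : 1 ≤ N) :
    |icN lam N x - ic lam x| ≤ 1 / (2 * Real.sqrt N) :=
  stmt8_general lam hlam x N hN
end

section
/- Let I^c be a non-null intricacy with associated symmetric probability measure λ_c on [0,1]. Then x = 1/2 is the unique maximum point of i^c on [0,1] if and only if 1/2 belongs to the topological support of λ_c; equivalently, for every x ∈ [0,1] with x ≠ 1/2 one has i^c(x) < i^c(1/2) if and only if λ_c((min{x,1−x}, max{x,1−x})) > 0. -/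
open Filter

open MeasureTheory

/-!
Symmetry of `λ` under `t ↦ 1 − t` lets one replace `2 ∫ g` by `∫ (g t + g (1 − t))`. Applied to
`g t = min t (1/2) − min t x`, this gives the exact formula
`i^c(1/2) − i^c(x) = ∫ (min{t, 1−t} − min{x, 1−x})⁺ λ(dt)`,
whose integrand is nonnegative and vanishes exactly off the interval
`(min{x,1−x}, max{x,1−x})`, the ball of radius `|x − 1/2|` about `1/2`. Hence `i^c(x) < i^c(1/2)`
exactly when `λ` charges that ball, and this holds for all `x ≠ 1/2` exactly when `1/2` lies in
the support of `λ`.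
-/

open Set Metric

section

variable {lam : Measure ℝ}

lemma integrable_of_continuous_of_measure_compl_eq_zero [IsFiniteMeasure lam] {K : Set ℝ}
    (hK : IsCompact K) (hlamK : lam Kᶜ = 0) {f : ℝ → ℝ} (hf : Continuous f) :
    Integrable f lam := by
  rw [← Measure.restrict_eq_self_of_ae_mem (mem_ae_iff.2 hlamK)]
  exact hf.continuousOn.integrableOn_compact hK

lemma integral_comp_one_sub_of_map_eq (hsym : lam.map (fun t => 1 - t) = lam) (f : ℝ → ℝ) :
    ∫ t, f (1 - t) ∂lam = ∫ t, f t ∂lam := by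
  have h := (measurableEmbedding_subLeft (1:ℝ)).integral_map (μ := lam) f
  rwa [hsym, eq_comm] at h

end

lemma min_half_sub_min_add_one_sub (t x : ℝ) :
    (min t (1/2) - min t x) + (min (1 - t) (1/2) - min (1 - t) x) =
      max 0 (min t (1 - t) - min x (1 - x)) + (1/2 - x) := by
  simp only [min_def, max_def]
  split_ifs <;> linarith

lemma support_max_zero_min_one_sub_sub (x : ℝ) :
    Function.support (fun t : ℝ => max 0 (min t (1 - t) - min x (1 - x))) =
      Ioo (min x (1 - x)) (max x (1 - x)) := by
  ext t
  simp only [Function.mem_support, ne_eq, max_eq_left_iff, sub_nonpos, not_le, lt_min_iff,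
    mem_Ioo]
  rcases le_total x (1/2) with h | h
  · rw [min_eq_left (by linarith), max_eq_right (by linarith)]
    exact and_congr_right fun _ => by constructor <;> intro <;> linarith
  · rw [min_eq_right (by linarith), max_eq_left (by linarith)]
    exact and_congr_right fun _ => by constructor <;> intro <;> linarith

lemma Ioo_min_max_one_sub_eq_ball (x : ℝ) :
    Ioo (min x (1 - x)) (max x (1 - x)) = ball (1/2) |x - 1/2| := by
  rw [Real.ball_eq_Ioo]
  rcases le_total x (1/2) with h | h
  · rw [min_eq_left (by linarith), max_eq_right (by linarith), abs_of_nonpos (by linarith)]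
    congr 1 <;> ring
  · rw [min_eq_right (by linarith), max_eq_left (by linarith), abs_of_nonneg (by linarith)]
    congr 1 <;> ring

lemma mem_mSupport_iff_forall_measure_ball_ne_zero (lam : Measure ℝ) (a : ℝ) {δ : ℝ}
    (hδ : 0 < δ) : a ∈ mSupport lam ↔ ∀ r, 0 < r → r ≤ δ → lam (ball a r) ≠ 0 := by
  refine ⟨fun h r hr _ => h _ isOpen_ball (mem_ball_self hr), fun h U hU haU => ?_⟩
  obtain ⟨ε, hε, hεU⟩ := Metric.isOpen_iff.1 hU a haU
  have hball := h (min ε δ) (lt_min hε hδ) (min_le_right _ _)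
  exact fun hU0 => hball (measure_mono_null ((ball_subset_ball (min_le_left _ _)).trans hεU) hU0)

section

variable {lam : Measure ℝ} [IsProbabilityMeasure lam] (hcc : lam (Icc (0:ℝ) 1)ᶜ = 0)
  (hsym : lam.map (fun t => 1 - t) = lam)
include hcc hsym

lemma ic_half_sub_ic (x : ℝ) :
    ic lam (1/2) - ic lam x = ∫ t, max 0 (min t (1 - t) - min x (1 - x)) ∂lam := by
  have hint : ∀ {f : ℝ → ℝ}, Continuous f → Integrable f lam :=
    integrable_of_continuous_of_measure_compl_eq_zero isCompact_Icc hcc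
  set g : ℝ → ℝ := fun t => min t (1/2) - min t x
  have hg : Continuous g := by fun_prop
  have hg' : Continuous fun t => g (1 - t) := by fun_prop
  calc ic lam (1/2) - ic lam x = 2 * ∫ t, g t ∂lam - (1/2 - x) := by
        rw [integral_sub (hint (by fun_prop)) (hint (by fun_prop))]; unfold ic; ring
    _ = ∫ t, (g t + g (1 - t)) ∂lam - (1/2 - x) := by
        rw [integral_add (hint hg) (hint hg'), integral_comp_one_sub_of_map_eq hsym]; ring
    _ = ∫ t, (max 0 (min t (1 - t) - min x (1 - x)) + (1/2 - x)) ∂lam - (1/2 - x) := by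
        simp only [g, min_half_sub_min_add_one_sub]
    _ = ∫ t, max 0 (min t (1 - t) - min x (1 - x)) ∂lam := by
        rw [integral_add (hint (by fun_prop)) (integrable_const _)]; simp

lemma ic_lt_ic_half_iff (x : ℝ) :
    ic lam x < ic lam (1/2) ↔ 0 < lam (Ioo (min x (1 - x)) (max x (1 - x))) := by
  have hint : Integrable (fun t : ℝ => max 0 (min t (1 - t) - min x (1 - x))) lam :=
    integrable_of_continuous_of_measure_compl_eq_zero isCompact_Icc hcc (by fun_prop)
  rw [← sub_pos, ic_half_sub_ic hcc hsym, integral_pos_iff_support_of_nonneg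
    (by intro t; exact le_max_left _ _) hint, support_max_zero_min_one_sub_sub]

end

/-- `x = 1/2` is the unique maximum point of `i^c` on `[0,1]` iff `1/2` belongs
to the topological support of `λ_c`; equivalently, for `x ≠ 1/2` in `[0,1]`,
`i^c(x) < i^c(1/2)` iff `λ_c((min{x,1−x}, max{x,1−x})) > 0`. -/
theorem stmt10 (lam : Measure ℝ) (hlam : IsIntricacyMeasure lam) :
    ((∀ x ∈ Set.Icc (0:ℝ) 1, x ≠ 1/2 → ic lam x < ic lam (1/2)) ↔
      (1/2 : ℝ) ∈ mSupport lam) ∧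
    (∀ x ∈ Set.Icc (0:ℝ) 1, x ≠ 1/2 →
      (ic lam x < ic lam (1/2) ↔
        0 < lam (Set.Ioo (min x (1 - x)) (max x (1 - x))))) := by
  obtain ⟨hprob, hcc, hsym, -⟩ := hlam
  have key := ic_lt_ic_half_iff hcc hsym
  refine ⟨?_, fun x _ _ => key x⟩
  simp only [key, Ioo_min_max_one_sub_eq_ball, pos_iff_ne_zero,
    mem_mSupport_iff_forall_measure_ball_ne_zero lam (1/2) (by norm_num : (0:ℝ) < 1/2)]
  constructor
  · intro h r hr hr2
    have hx : 1/2 - r ∈ Icc (0:ℝ) 1 := ⟨by linarith, by linarith⟩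
    simpa [abs_of_pos hr] using h (1/2 - r) hx (by linarith)
  · intro h x hx hne
    exact h _ (abs_pos.2 (sub_ne_zero.2 hne)) (abs_le.2 ⟨by linarith [hx.1], by linarith [hx.2]⟩)
end
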